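/- arXiv:2312.03370 — 7 statements merged into one kernel-verified Lean document; each statement's English description precedes it below -/
import Mathlib

section
/- For all integers $m\ge 0$ and $n\ge 1$, the function $q_{m,n}(x)=\dfrac{\int_0^x t^m(1+t)^n\,dt}{x^m(1+x)^n}$ is strictly concave on $(0,\infty)$; in fact for every $x>0$, $(1+x)^{n+2}q_{m,n}''(x) = -2mn\sum_{k=1}^{n-1}\binom{n-1}{k}\dfrac{x^k}{(m+k)(m+1+k)(m+2+k)} - \dfrac{2n}{(m+1)(m+2)} < 0$. -/
open Finset

namespace Stmt2Proof

noncomputable section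

def B (m n j : ℕ) : ℝ := (n.choose j : ℝ) / ((m : ℝ) + j + 1)

def Pf (m n : ℕ) (x : ℝ) : ℝ := ∑ j ∈ range (n+1), B m n j * x ^ (j+1)
def Pf1 (m n : ℕ) (x : ℝ) : ℝ := ∑ j ∈ range (n+1), B m n j * ((j:ℝ)+1) * x ^ j
def Pf2 (m n : ℕ) (x : ℝ) : ℝ :=
  ∑ j ∈ range (n+1), B m n (j+1) * (((j:ℝ)+2) * ((j:ℝ)+1)) * x ^ j

lemma B_vanish (m n k : ℕ) (h : n < k) : B m n k = 0 := by
  simp [B, Nat.choose_eq_zero_of_lt h]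

lemma hasDerivAt_Pf (m n : ℕ) (x : ℝ) : HasDerivAt (fun y => Pf m n y) (Pf1 m n x) x := by
  unfold Pf Pf1
  refine HasDerivAt.fun_sum fun j _ => ?_
  have := (hasDerivAt_pow (j+1) x).const_mul (B m n j)
  convert this using 1
  · rfl
  push_cast [Nat.add_sub_cancel]
  ring

lemma hasDerivAt_Pf1 (m n : ℕ) (x : ℝ) : HasDerivAt (fun y => Pf1 m n y) (Pf2 m n x) x := by
  have h : HasDerivAt (fun y => Pf1 m n y)
      (∑ j ∈ range (n+1), B m n j * ((j:ℝ)+1) * ((j:ℝ) * x ^ (j-1))) x := by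
    unfold Pf1
    exact HasDerivAt.fun_sum fun j _ => (hasDerivAt_pow j x).const_mul _
  convert h using 1
  rw [Pf2, Finset.sum_range_succ,
    Finset.sum_range_succ' (fun j => B m n j * ((j:ℝ)+1) * ((j:ℝ) * x ^ (j-1)))]
  rw [B_vanish m n (n+1) (by omega)]
  simp only [Nat.cast_zero, Nat.cast_add, Nat.cast_one, Nat.add_sub_cancel, pow_zero]
  rw [Finset.sum_congr rfl (fun j _ => by push_cast; ring : ∀ j ∈ range n,
    B m n (j+1) * (((j:ℝ)+2) * ((j:ℝ)+1)) * x ^ j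
      = B m n (j+1) * (((j:ℝ)+1)+1) * (((j:ℝ)+1) * x ^ j))]
  ring

lemma hasDerivAt_div_pow {A : ℝ → ℝ} {A' : ℝ} {s : ℕ} {x : ℝ} (hx : (1:ℝ) + x ≠ 0)
    (hA : HasDerivAt A A' x) :
    HasDerivAt (fun y => A y / (1+y)^(s+1))
      ((A' * (1+x) - ((s:ℝ)+1) * A x) / (1+x)^(s+2)) x := by
  have hb : HasDerivAt (fun y : ℝ => (1+y)^(s+1)) (((s:ℝ)+1) * (1+x)^s) x := by
    have := ((hasDerivAt_id x).const_add 1).pow (s+1)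
    simpa using ((hasDerivAt_id x).const_add 1).fun_pow (s+1)
  have h := hA.div hb (pow_ne_zero _ hx)
  convert h using 1
  · rfl
  · rfl
  · rfl
  field_simp
  ring

def fq (m n : ℕ) (x : ℝ) : ℝ := Pf m n x / (1+x)^n
def Qf (m n : ℕ) (x : ℝ) : ℝ := Pf1 m n x * (1+x) - (n:ℝ) * Pf m n x
def fq1 (m n : ℕ) (x : ℝ) : ℝ := Qf m n x / (1+x)^(n+1)
def Rf (m n : ℕ) (x : ℝ) : ℝ :=
  (Pf2 m n x * (1+x) + (1 - (n:ℝ)) * Pf1 m n x) * (1+x) - ((n:ℝ)+1) * Qf m n x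
def fq2 (m n : ℕ) (x : ℝ) : ℝ := Rf m n x / (1+x)^(n+2)

lemma hasDerivAt_fq (m N : ℕ) {x : ℝ} (hx : (1:ℝ) + x ≠ 0) :
    HasDerivAt (fun y => fq m (N+1) y) (fq1 m (N+1) x) x := by
  have h := hasDerivAt_div_pow (s := N) hx (hasDerivAt_Pf m (N+1) x)
  convert h using 1
  · rfl
  unfold fq1 Qf
  push_cast
  ring_nf

lemma hasDerivAt_fq1 (m N : ℕ) {x : ℝ} (hx : (1:ℝ) + x ≠ 0) :
    HasDerivAt (fun y => fq1 m (N+1) y) (fq2 m (N+1) x) x := by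
  have hQ : HasDerivAt (fun y => Qf m (N+1) y)
      (Pf2 m (N+1) x * (1+x) + (1 - ((N:ℝ)+1)) * Pf1 m (N+1) x) x := by
    have h1 := (hasDerivAt_Pf1 m (N+1) x).mul ((hasDerivAt_id x).const_add 1)
    have h2 := (hasDerivAt_Pf m (N+1) x).const_mul ((N:ℝ)+1)
    have := h1.sub h2
    unfold Qf
    convert this using 1
    · rfl
    · rfl
    · ext y; simp only [id_eq, Pi.mul_apply, Pi.sub_apply]; push_cast; ring
    · simp only [id_eq]; push_cast; ring
  have h := hasDerivAt_div_pow (s := N+1) hx hQ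
  convert h using 1
  · rfl
  unfold fq2 Rf
  push_cast
  ring_nf

lemma iteratedDeriv_two_fq (m N : ℕ) {x : ℝ} (hx : -1 < x) :
    iteratedDeriv 2 (fun y => fq m (N+1) y) x = fq2 m (N+1) x := by
  rw [iteratedDeriv_succ, iteratedDeriv_one]
  have hev : deriv (fun y => fq m (N+1) y) =ᶠ[nhds x] fun y => fq1 m (N+1) y := by
    filter_upwards [isOpen_Ioi.mem_nhds (Set.mem_Ioi.2 hx)] with y hy
    exact (hasDerivAt_fq m N (by simp only [Set.mem_Ioi] at hy; linarith)).deriv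
  rw [hev.deriv_eq]
  exact (hasDerivAt_fq1 m N (by linarith)).deriv

lemma Rf_eq (m N : ℕ) (x : ℝ) :
    Rf m (N+1) x = Pf2 m (N+1) x * (1+x)^2 - 2*((N:ℝ)+1) * (Pf1 m (N+1) x * (1+x))
      + ((N:ℝ)+1)*((N:ℝ)+2) * Pf m (N+1) x := by
  unfold Rf Qf
  push_cast
  ring

def sh (c : ℕ → ℝ) : ℕ → ℝ
  | 0 => 0
  | k+1 => c k

def aC (m N k : ℕ) : ℝ := B m (N+1) (k+1) * (((k:ℝ)+2) * ((k:ℝ)+1))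
def bC (m N k : ℕ) : ℝ := B m (N+1) k * ((k:ℝ)+1)
def cC (m N k : ℕ) : ℝ := B m (N+1) k

def comb (m N : ℕ) (k : ℕ) : ℝ :=
  aC m N k + 2 * sh (aC m N) k + sh (sh (aC m N)) k
    - 2*((N:ℝ)+1) * bC m N k - 2*((N:ℝ)+1) * sh (bC m N) k
    + ((N:ℝ)+1)*((N:ℝ)+2) * sh (cC m N) k

lemma mulX (c : ℕ → ℝ) (L : ℕ) (x : ℝ) :
    x * ∑ k ∈ range L, c k * x^k = ∑ k ∈ range (L+1), sh c k * x^k := by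
  rw [Finset.mul_sum, Finset.sum_range_succ']
  simp only [sh, pow_zero, mul_one, add_zero, mul_zero, zero_mul]
  exact Finset.sum_congr rfl fun k _ => by rw [pow_succ]; ring

lemma sum_extend (f : ℕ → ℝ) {L L' : ℕ} (h : L ≤ L') (hf : ∀ j, L ≤ j → f j = 0) :
    ∑ j ∈ range L, f j = ∑ j ∈ range L', f j :=
  Finset.sum_subset (Finset.range_subset_range.2 h)
    (fun j _ hj' => hf j (le_of_not_gt (by simpa using hj')))

lemma sh_vanish {c : ℕ → ℝ} {L : ℕ} (hc : ∀ k, L ≤ k → c k = 0) :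
    ∀ k, L+1 ≤ k → sh c k = 0 := by
  intro k hk
  cases k with
  | zero => omega
  | succ k' => exact hc k' (by omega)

lemma aC_vanish (m N : ℕ) : ∀ k, N+1 ≤ k → aC m N k = 0 := by
  intro k hk; simp [aC, B_vanish m (N+1) (k+1) (by omega)]
lemma bC_vanish (m N : ℕ) : ∀ k, N+2 ≤ k → bC m N k = 0 := by
  intro k hk; simp [bC, B_vanish m (N+1) k (by omega)]
lemma cC_vanish (m N : ℕ) : ∀ k, N+2 ≤ k → cC m N k = 0 := by
  intro k hk; simp [cC, B_vanish m (N+1) k (by omega)]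

lemma comb_zero (m N : ℕ) :
    comb m N 0 = - (2*((N:ℝ)+1) / (((m:ℝ)+1)*((m:ℝ)+2))) := by
  simp only [comb, sh, aC, bC, B, zero_add, Nat.choose_one_right, Nat.choose_zero_right]
  push_cast
  have h1 : ((m:ℝ)+0+1) ≠ 0 := by positivity
  have h2 : ((m:ℝ)+1+1) ≠ 0 := by positivity
  field_simp
  ring

lemma comb_succ (m N i : ℕ) :
    comb m N (i+1)
      = B m (N+1) (i+2) * (((i:ℝ)+3)*((i:ℝ)+2)) + 2 * (B m (N+1) (i+1) * (((i:ℝ)+2)*((i:ℝ)+1)))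
        + B m (N+1) i * (((i:ℝ)+1)*(i:ℝ))
        - 2*((N:ℝ)+1) * (B m (N+1) (i+1) * ((i:ℝ)+2)) - 2*((N:ℝ)+1) * (B m (N+1) i * ((i:ℝ)+1))
        + ((N:ℝ)+1)*((N:ℝ)+2) * B m (N+1) i := by
  have ha2 : sh (sh (aC m N)) (i+1) = B m (N+1) i * (((i:ℝ)+1)*(i:ℝ)) := by
    cases i with
    | zero => simp [sh]
    | succ i' => simp only [sh, aC]; push_cast; ring
  unfold comb
  rw [ha2]
  simp only [sh, aC, bC, cC]
  push_cast
  ring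

lemma coeff_main (m N i : ℕ) (hi : i < N) :
    comb m N (i+1) = -2*(m:ℝ)*((N:ℝ)+1) * (N.choose (i+1) : ℝ) /
      (((m:ℝ)+(i:ℝ)+1) * ((m:ℝ)+(i:ℝ)+2) * ((m:ℝ)+(i:ℝ)+3)) := by
  have h1 : (((N+1).choose (i+1) : ℕ) : ℝ) * ((i:ℝ)+1)
      = (((N+1).choose i : ℕ) : ℝ) * ((N:ℝ)+1-(i:ℝ)) := by
    have h := congrArg (Nat.cast (R := ℝ)) (Nat.choose_succ_right_eq (N+1) i)
    push_cast [Nat.cast_sub (by omega : i ≤ N+1)] at h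
    linarith
  have h2 : (((N+1).choose (i+2) : ℕ) : ℝ) * ((i:ℝ)+2)
      = (((N+1).choose (i+1) : ℕ) : ℝ) * ((N:ℝ)-(i:ℝ)) := by
    have h := congrArg (Nat.cast (R := ℝ)) (Nat.choose_succ_right_eq (N+1) (i+1))
    push_cast [Nat.cast_sub (by omega : i ≤ N)] at h
    linarith
  have h3 : ((N:ℝ)+1) * ((N.choose (i+1) : ℕ) : ℝ)
      = (((N+1).choose (i+2) : ℕ) : ℝ) * ((i:ℝ)+2) := by
    have h := congrArg (Nat.cast (R := ℝ)) (Nat.add_one_mul_choose_eq N (i+1))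
    push_cast at h
    linarith
  have e1 : (((N+1).choose (i+1) : ℕ) : ℝ)
      = (((N+1).choose i : ℕ) : ℝ) * ((N:ℝ)+1-(i:ℝ)) / ((i:ℝ)+1) := by
    rw [eq_div_iff (by positivity)]; linarith
  have e3 : ((N.choose (i+1) : ℕ) : ℝ)
      = (((N+1).choose (i+2) : ℕ) : ℝ) * ((i:ℝ)+2) / ((N:ℝ)+1) := by
    rw [eq_div_iff (by positivity)]; linarith
  have e2 : (((N+1).choose (i+2) : ℕ) : ℝ)
      = (((N+1).choose i : ℕ) : ℝ) * ((N:ℝ)+1-(i:ℝ)) * ((N:ℝ)-(i:ℝ)) / (((i:ℝ)+1) * ((i:ℝ)+2)) := by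
    rw [eq_div_iff (by positivity)]
    rw [e1] at h2
    field_simp at h2
    linarith
  rw [comb_succ]
  unfold B
  rw [e3, e2, e1]
  have d1 : ((m:ℝ)+(i:ℝ)+1) ≠ 0 := by positivity
  have d2 : ((m:ℝ)+(i:ℝ)+2) ≠ 0 := by positivity
  have d3 : ((m:ℝ)+(i:ℝ)+3) ≠ 0 := by positivity
  push_cast
  field_simp
  ring

lemma comb_top1 (m N : ℕ) : comb m N (N+1) = 0 := by
  rw [comb_succ, B_vanish m (N+1) (N+2) (by omega)]
  ring

lemma comb_top2 (m N : ℕ) : comb m N (N+2) = 0 := by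
  have h : N+2 = (N+1)+1 := rfl
  rw [h, comb_succ, B_vanish m (N+1) (N+3) (by omega), B_vanish m (N+1) (N+2) (by omega)]
  push_cast
  ring

lemma comb_top3 (m N : ℕ) : comb m N (N+3) = 0 := by
  have h : N+3 = (N+2)+1 := rfl
  rw [h, comb_succ, B_vanish m (N+1) (N+4) (by omega), B_vanish m (N+1) (N+3) (by omega),
    B_vanish m (N+1) (N+2) (by omega)]
  push_cast
  ring

lemma key (m N : ℕ) (x : ℝ) :
    Pf2 m (N+1) x * (1+x)^2 - 2*((N:ℝ)+1) * (Pf1 m (N+1) x * (1+x))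
      + ((N:ℝ)+1)*((N:ℝ)+2) * Pf m (N+1) x
    = -2 * (m:ℝ) * ((N:ℝ)+1) * (∑ k ∈ Icc 1 N, ((N.choose k : ℝ) * x ^ k /
          (((m:ℝ) + k) * ((m:ℝ) + 1 + k) * ((m:ℝ) + 2 + k))))
      - 2*((N:ℝ)+1) / (((m:ℝ)+1)*((m:ℝ)+2)) := by
  have h1' : Pf2 m (N+1) x = ∑ k ∈ range (N+2), aC m N k * x^k := rfl
  have h4' : Pf1 m (N+1) x = ∑ k ∈ range (N+2), bC m N k * x^k := rfl
  have h1 : Pf2 m (N+1) x = ∑ k ∈ range (N+4), aC m N k * x^k := by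
    rw [h1']
    exact sum_extend _ (by omega) (fun j hj => by rw [aC_vanish m N j (by omega), zero_mul])
  have h3 : x * (x * Pf2 m (N+1) x) = ∑ k ∈ range (N+4), sh (sh (aC m N)) k * x^k := by
    rw [h1', mulX, mulX]
  have h2 : x * Pf2 m (N+1) x = ∑ k ∈ range (N+4), sh (aC m N) k * x^k := by
    rw [h1', mulX]
    exact sum_extend _ (by omega)
      (fun j hj => by rw [sh_vanish (aC_vanish m N) j (by omega), zero_mul])
  have h4 : Pf1 m (N+1) x = ∑ k ∈ range (N+4), bC m N k * x^k := by
    rw [h4']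
    exact sum_extend _ (by omega) (fun j hj => by rw [bC_vanish m N j (by omega), zero_mul])
  have h5 : x * Pf1 m (N+1) x = ∑ k ∈ range (N+4), sh (bC m N) k * x^k := by
    rw [h4', mulX]
    exact sum_extend _ (by omega)
      (fun j hj => by rw [sh_vanish (bC_vanish m N) j (by omega), zero_mul])
  have h6 : Pf m (N+1) x = ∑ k ∈ range (N+4), sh (cC m N) k * x^k := by
    have h0 : Pf m (N+1) x = x * ∑ j ∈ range (N+2), cC m N j * x^j := by
      rw [Finset.mul_sum]
      exact Finset.sum_congr rfl fun j _ => by rw [cC]; ring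
    rw [h0, mulX]
    exact sum_extend _ (by omega)
      (fun j hj => by rw [sh_vanish (cC_vanish m N) j (by omega), zero_mul])
  have expand : Pf2 m (N+1) x * (1+x)^2 - 2*((N:ℝ)+1) * (Pf1 m (N+1) x * (1+x))
      + ((N:ℝ)+1)*((N:ℝ)+2) * Pf m (N+1) x
    = Pf2 m (N+1) x + 2 * (x * Pf2 m (N+1) x) + x * (x * Pf2 m (N+1) x)
      - 2*((N:ℝ)+1) * Pf1 m (N+1) x - 2*((N:ℝ)+1) * (x * Pf1 m (N+1) x)
      + ((N:ℝ)+1)*((N:ℝ)+2) * Pf m (N+1) x := by ring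
  rw [expand, h3, h2, h1, h5, h4, h6]
  rw [Finset.mul_sum, Finset.mul_sum, Finset.mul_sum, Finset.mul_sum,
    ← Finset.sum_add_distrib, ← Finset.sum_add_distrib, ← Finset.sum_sub_distrib,
    ← Finset.sum_sub_distrib, ← Finset.sum_add_distrib]
  have hgather : ∀ k ∈ range (N+4),
      aC m N k * x^k + 2 * (sh (aC m N) k * x^k) + sh (sh (aC m N)) k * x^k
        - 2*((N:ℝ)+1) * (bC m N k * x^k) - 2*((N:ℝ)+1) * (sh (bC m N) k * x^k)
        + ((N:ℝ)+1)*((N:ℝ)+2) * (sh (cC m N) k * x^k)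
      = comb m N k * x^k := fun k _ => by rw [comb]; ring
  rw [Finset.sum_congr rfl hgather]
  have hsplit : ∑ k ∈ range (N+4), comb m N k * x^k
      = comb m N 0 + ∑ k ∈ range N, comb m N (k+1) * x^(k+1) := by
    rw [show N+4 = (N+3)+1 from rfl, Finset.sum_range_succ,
      show N+3 = (N+2)+1 from rfl, Finset.sum_range_succ,
      show N+2 = (N+1)+1 from rfl, Finset.sum_range_succ,
      Finset.sum_range_succ']
    rw [comb_top1, comb_top2, comb_top3]
    simp
    ring
  rw [hsplit, comb_zero]
  rw [← Finset.Ico_add_one_right_eq_Icc, Finset.sum_Ico_eq_sum_range]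
  rw [show N+1-1 = N from rfl]
  rw [Finset.mul_sum]
  rw [Finset.sum_congr rfl (fun i (hi : i ∈ range N) => ?_)]
  · ring
  · rw [Nat.add_comm 1 i, coeff_main m N i (mem_range.1 hi)]
    push_cast
    field_simp
    ring

lemma integral_eq (m n : ℕ) (y : ℝ) :
    ∫ t in (0:ℝ)..y, t^m * (1+t)^n
      = ∑ j ∈ range (n+1), (n.choose j : ℝ) * (y^(m+j+1) / ((m:ℝ)+(j:ℝ)+1)) := by
  have hrw : ∀ t ∈ Set.uIcc (0:ℝ) y, t^m * (1+t)^n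
      = ∑ j ∈ range (n+1), (n.choose j : ℝ) * t^(m+j) := by
    intro t _
    rw [add_comm (1:ℝ) t, add_pow, Finset.mul_sum]
    exact Finset.sum_congr rfl fun j _ => by rw [one_pow, pow_add]; ring
  rw [intervalIntegral.integral_congr hrw,
    intervalIntegral.integral_finset_sum
      (fun j _ => ((continuous_const.fun_mul (continuous_pow _)).intervalIntegrable _ _))]
  refine Finset.sum_congr rfl fun j _ => ?_
  rw [intervalIntegral.integral_const_mul, integral_pow]
  rw [zero_pow (by omega : m+j+1 ≠ 0)]
  push_cast
  ring

lemma q_eq (m N : ℕ) {y : ℝ} (hy : 0 < y) :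
    (∫ t in (0:ℝ)..y, t^m * (1+t)^(N+1)) / (y^m * (1+y)^(N+1)) = fq m (N+1) y := by
  rw [integral_eq]
  have hnum : (∑ j ∈ range (N+1+1), (((N+1).choose j : ℕ) : ℝ) * (y^(m+j+1) / ((m:ℝ)+(j:ℝ)+1)))
      = Pf m (N+1) y * y^m := by
    rw [Pf, Finset.sum_mul]
    refine Finset.sum_congr rfl fun j _ => ?_
    rw [B, show m+j+1 = m+(j+1) from rfl, pow_add]
    have : ((m:ℝ)+(j:ℝ)+1) ≠ 0 := by positivity
    field_simp
  rw [hnum, fq]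
  have h1 : y^m ≠ 0 := pow_ne_zero _ hy.ne'
  have h2 : ((1:ℝ)+y)^(N+1) ≠ 0 := pow_ne_zero _ (by linarith)
  field_simp

end

end Stmt2Proof

open Stmt2Proof

/-- For integers `m ≥ 0`, `n ≥ 1`, the function
`q_{m,n}(x) = (∫₀ˣ tᵐ(1+t)ⁿ dt) / (xᵐ(1+x)ⁿ)` is strictly concave on `(0,∞)`;
in fact for every `x > 0`,
`(1+x)^{n+2} q_{m,n}''(x)
  = -2mn ∑_{k=1}^{n-1} C(n-1,k) xᵏ/((m+k)(m+1+k)(m+2+k)) - 2n/((m+1)(m+2)) < 0`. -/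
theorem stmt_2 (m n : ℕ) (hn : 1 ≤ n) :
    let q : ℝ → ℝ := fun x => (∫ t in (0:ℝ)..x, t ^ m * (1 + t) ^ n) / (x ^ m * (1 + x) ^ n)
    StrictConcaveOn ℝ (Set.Ioi (0:ℝ)) q ∧
    ∀ x : ℝ, 0 < x →
      (1 + x) ^ (n + 2) * iteratedDeriv 2 q x =
          -2 * (m : ℝ) * n *
              (∑ k ∈ Finset.Icc 1 (n - 1), ((n - 1).choose k : ℝ) * x ^ k /
                (((m : ℝ) + k) * ((m : ℝ) + 1 + k) * ((m : ℝ) + 2 + k)))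
            - 2 * (n : ℝ) / (((m : ℝ) + 1) * ((m : ℝ) + 2)) ∧
      (1 + x) ^ (n + 2) * iteratedDeriv 2 q x < 0 := by
  obtain ⟨N, rfl⟩ : ∃ N, n = N+1 := ⟨n-1, by omega⟩
  intro q
  have main : ∀ x : ℝ, 0 < x → (1 + x) ^ (N+1+2) * iteratedDeriv 2 q x
      = -2 * (m:ℝ) * ((N:ℝ)+1) * (∑ k ∈ Finset.Icc 1 N, ((N.choose k : ℝ) * x ^ k /
            (((m:ℝ) + k) * ((m:ℝ) + 1 + k) * ((m:ℝ) + 2 + k))))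
        - 2*((N:ℝ)+1) / (((m:ℝ)+1)*((m:ℝ)+2)) := by
    intro x hx
    have hx1 : (1:ℝ) + x ≠ 0 := by linarith
    have hqe : q =ᶠ[nhds x] fun y => fq m (N+1) y := by
      filter_upwards [isOpen_Ioi.mem_nhds (Set.mem_Ioi.2 hx)] with y hy
      exact q_eq m N (Set.mem_Ioi.1 hy)
    have hit : iteratedDeriv 2 q x = fq2 m (N+1) x := by
      have h' : iteratedDeriv 2 q x = iteratedDeriv 2 (fun y => fq m (N+1) y) x := by
        rw [iteratedDeriv_succ, iteratedDeriv_one, iteratedDeriv_succ, iteratedDeriv_one]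
        exact (hqe.deriv).deriv_eq
      rw [h', iteratedDeriv_two_fq m N (by linarith)]
    rw [hit, fq2, mul_comm, div_mul_cancel₀ _ (pow_ne_zero _ hx1), Rf_eq, key m N x]
  have hlt : ∀ x : ℝ, 0 < x →
      -2 * (m:ℝ) * ((N:ℝ)+1) * (∑ k ∈ Finset.Icc 1 N, ((N.choose k : ℝ) * x ^ k /
            (((m:ℝ) + k) * ((m:ℝ) + 1 + k) * ((m:ℝ) + 2 + k))))
        - 2*((N:ℝ)+1) / (((m:ℝ)+1)*((m:ℝ)+2)) < 0 := by
    intro x hx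
    have hS : 0 ≤ ∑ k ∈ Finset.Icc 1 N, ((N.choose k : ℝ) * x ^ k /
        (((m:ℝ) + k) * ((m:ℝ) + 1 + k) * ((m:ℝ) + 2 + k))) := by
      refine Finset.sum_nonneg fun k hk => ?_
      have hk1 : (1:ℝ) ≤ (k:ℝ) := by exact_mod_cast (Finset.mem_Icc.1 hk).1
      have h1 : (0:ℝ) ≤ (N.choose k : ℝ) * x ^ k :=
        mul_nonneg (Nat.cast_nonneg _) (pow_nonneg hx.le _)
      have h2 : (0:ℝ) < ((m:ℝ) + k) * ((m:ℝ) + 1 + k) * ((m:ℝ) + 2 + k) := by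
        have hm : (0:ℝ) ≤ (m:ℝ) := Nat.cast_nonneg _
        have p1 : (0:ℝ) < (m:ℝ) + k := by linarith
        have p2 : (0:ℝ) < (m:ℝ) + 1 + k := by linarith
        have p3 : (0:ℝ) < (m:ℝ) + 2 + k := by linarith
        exact mul_pos (mul_pos p1 p2) p3
      exact div_nonneg h1 h2.le
    have h3 : (0:ℝ) < 2*((N:ℝ)+1) / (((m:ℝ)+1)*((m:ℝ)+2)) := by positivity
    have h4 : (0:ℝ) ≤ 2 * (m:ℝ) * ((N:ℝ)+1) *
        (∑ k ∈ Finset.Icc 1 N, ((N.choose k : ℝ) * x ^ k /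
            (((m:ℝ) + k) * ((m:ℝ) + 1 + k) * ((m:ℝ) + 2 + k)))) := by positivity
    nlinarith [h4]
  constructor
  · apply strictConcaveOn_of_deriv2_neg (convex_Ioi 0)
    · have hfc : ContinuousOn (fun y => fq m (N+1) y) (Set.Ioi 0) := by
        apply ContinuousOn.div
        · exact (continuous_finset_sum _ fun j _ =>
            (continuous_const.mul (continuous_pow _))).continuousOn
        · exact ((continuous_const.add continuous_id).pow _).continuousOn
        · intro y hy
          have : (0:ℝ) < y := Set.mem_Ioi.1 hy
          exact pow_ne_zero _ (by linarith)
      exact hfc.congr (fun y hy => q_eq m N (Set.mem_Ioi.1 hy))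
    · intro x hx
      rw [interior_Ioi] at hx
      have h0 : 0 < x := Set.mem_Ioi.1 hx
      have := main x h0
      have h2 := hlt x h0
      rw [← iteratedDeriv_eq_iterate]
      nlinarith [pow_pos (by linarith : (0:ℝ) < 1+x) (N+1+2)]
  · intro x hx
    have h1 := main x hx
    have h2 := hlt x hx
    have hsimp : N + 1 - 1 = N := rfl
    constructor
    · rw [h1, hsimp]
      push_cast
      ring
    · rw [h1]; exact h2
end

section
/- Let $m\ge0$, $n\ge1$ be integers and let $\lambda\ge0$, $\mu\ge0$ be reals with $\mu(1+\lambda)\le n$. Then the function $x\mapsto \dfrac{\mu\, I_{m,n,\lambda}(x)-n\, I_{m,n-1,\lambda}(x)}{x^m(1+x)^n}$ is convex on $(0,\infty)$. Consequently, if $a>\lambda$ and $b>0$ are such that this function takes the value $b$ at $x=a$ and $b\le a$, then it is bounded above by $\frac{b}{a}x$ on $[\lambda,a]$. -/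
open Set intervalIntegral MeasureTheory

/-- Oriented integral `I_{m,n,s}(x) = ∫_s^x tᵐ(1+t)ⁿ dt`. -/
noncomputable def Imns (m n : ℕ) (s x : ℝ) : ℝ := ∫ t in s..x, t ^ m * (1 + t) ^ n

lemma Imns_hasDeriv (m n : ℕ) (s x : ℝ) :
    HasDerivAt (fun y => Imns m n s y) (x ^ m * (1 + x) ^ n) x := by
  have hc : Continuous (fun t : ℝ => t ^ m * (1 + t) ^ n) := by continuity
  exact intervalIntegral.integral_hasDerivAt_right (hc.intervalIntegrable _ _)
    (hc.stronglyMeasurableAtFilter _ _) hc.continuousAt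

lemma pow_deriv2 (n : ℕ) (x : ℝ) :
    HasDerivAt (fun y : ℝ => (1+y) ^ n) ((n:ℝ) * (1+x) ^ (n-1)) x := by
  have h1 : HasDerivAt (fun y : ℝ => 1 + y) 1 x := (hasDerivAt_id x).const_add 1
  simpa using h1.fun_pow n

lemma epow (k : ℕ) {z : ℝ} (hz : z ≠ 0) : (k:ℝ) * z^(k-1) = k * z^k / z := by
  cases k with
  | zero => simp
  | succ j => rw [pow_succ, Nat.add_sub_cancel]; field_simp

lemma epow2 (k : ℕ) {z : ℝ} (hz : z ≠ 0) :
    (k:ℝ) * (((k-1:ℕ)):ℝ) * z^(k-1-1) = (k:ℝ) * ((k:ℝ)-1) * z^k / z^2 := by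
  match k with
  | 0 => simp
  | 1 => simp
  | (j+2) =>
    have h1 : (j+2-1-1 : ℕ) = j := rfl
    have h2 : ((j+2-1 : ℕ) : ℝ) = (j:ℝ)+1 := by push_cast; ring
    rw [h1, h2]
    push_cast
    rw [pow_add]
    field_simp
    ring

section main
variable (m n : ℕ) (lam mu : ℝ)

noncomputable def gg (x : ℝ) : ℝ := mu * Imns m n lam x - n * Imns m (n-1) lam x
noncomputable def dd (x : ℝ) : ℝ := x ^ m * (1 + x) ^ n
noncomputable def G1 (x : ℝ) : ℝ := mu * (x ^ m * (1+x)^n) - (n:ℝ) * (1+x)^(n-1) * x^m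
noncomputable def D1 (x : ℝ) : ℝ := (m:ℝ) * x^(m-1) * (1+x)^n + (n:ℝ) * (1+x)^(n-1) * x^m
noncomputable def WW (x : ℝ) : ℝ :=
  (m:ℝ)*((m:ℝ)+1)*(1+x)^2 + 2*(m:ℝ)*(n:ℝ)*x*(1+x) + (n:ℝ)*((n:ℝ)+1)*x^2
noncomputable def VV (x : ℝ) : ℝ :=
  mu*(m:ℝ)*x*(1+x)^2 + mu*(n:ℝ)*x^2*(1+x) + (m:ℝ)*((m:ℝ)+1)*(1+x)^2 + (m:ℝ)*(n:ℝ)*x*(1+x)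
noncomputable def WW' (x : ℝ) : ℝ :=
  (m:ℝ)*((m:ℝ)+1)*(2*(1+x)) + 2*(m:ℝ)*(n:ℝ)*(1+2*x) + (n:ℝ)*((n:ℝ)+1)*(2*x)
noncomputable def VV' (x : ℝ) : ℝ :=
  mu*(m:ℝ)*((1+x)^2 + x*(2*(1+x))) + mu*(n:ℝ)*(2*x*(1+x)+x^2) +
    (m:ℝ)*((m:ℝ)+1)*(2*(1+x)) + (m:ℝ)*(n:ℝ)*(1+2*x)

lemma gg_hasDeriv (x : ℝ) : HasDerivAt (gg m n lam mu) (G1 m n mu x) x := by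
  have h1 := (Imns_hasDeriv m n lam x).const_mul mu
  have h2 := (Imns_hasDeriv m (n-1) lam x).const_mul (n:ℝ)
  have h3 := h1.fun_sub h2
  simp only [gg, G1]
  convert! h3 using 1
  ring

lemma dd_hasDeriv (x : ℝ) : HasDerivAt (dd m n) (D1 m n x) x := by
  have h := (hasDerivAt_pow m x).fun_mul (pow_deriv2 n x)
  simp only [dd, D1]
  convert! h using 1
  ring

lemma WW_hasDeriv (x : ℝ) : HasDerivAt (WW m n) (WW' m n x) x := by
  have h1 := pow_deriv2 2 x
  have hid : HasDerivAt (fun y : ℝ => y) 1 x := hasDerivAt_id x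
  have h2 : HasDerivAt (fun y : ℝ => y*(1+y)) (1+2*x) x := by
    have := hid.fun_mul (hid.const_add 1)
    convert! this using 1; ring
  have h3 := hasDerivAt_pow 2 x
  have := ((h1.const_mul ((m:ℝ)*((m:ℝ)+1))).fun_add
    (h2.const_mul (2*(m:ℝ)*(n:ℝ)))).fun_add (h3.const_mul ((n:ℝ)*((n:ℝ)+1)))
  simp only [WW, WW']
  convert! this using 1
  · ext y; simp only [WW]; ring
  · push_cast; ring

lemma VV_hasDeriv (x : ℝ) : HasDerivAt (VV m n mu) (VV' m n mu x) x := by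
  have hid : HasDerivAt (fun y : ℝ => y) 1 x := hasDerivAt_id x
  have h1 : HasDerivAt (fun y : ℝ => y*(1+y)^2) ((1+x)^2 + x*(2*(1+x))) x := by
    have := hid.fun_mul (pow_deriv2 2 x)
    convert! this using 1; push_cast; ring
  have h2 : HasDerivAt (fun y : ℝ => y^2*(1+y)) (2*x*(1+x)+x^2) x := by
    have := (hasDerivAt_pow 2 x).fun_mul (hid.const_add 1)
    convert! this using 1; push_cast; ring
  have h3 := pow_deriv2 2 x
  have h4 : HasDerivAt (fun y : ℝ => y*(1+y)) (1+2*x) x := by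
    have := hid.fun_mul (hid.const_add 1)
    convert! this using 1; ring
  have := (((h1.const_mul (mu*(m:ℝ))).fun_add (h2.const_mul (mu*(n:ℝ)))).fun_add
    ((h3.const_mul ((m:ℝ)*((m:ℝ)+1))))).fun_add (h4.const_mul ((m:ℝ)*(n:ℝ)))
  simp only [VV, VV']
  convert! this using 1
  · ext y; simp only [VV]; ring
  · push_cast; ring

lemma WV_le {y : ℝ} (hy : 0 ≤ y) (hmu : 0 ≤ mu) (hn : mu*(1+y) ≤ (n:ℝ)) :
    VV m n mu y ≤ WW m n y := by
  have hprod : mu*(1+y)*(y*((m:ℝ)*(1+y)+(n:ℝ)*y)) ≤ (n:ℝ)*(y*((m:ℝ)*(1+y)+(n:ℝ)*y)) :=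
    mul_le_mul_of_nonneg_right hn (by positivity)
  have h2 : 0 ≤ (n:ℝ)*y^2 := by positivity
  simp only [VV, WW]
  nlinarith [hprod, h2]

lemma WW_pos {y : ℝ} (hm : 1 ≤ m) (hy : 0 ≤ y) : 0 < WW m n y := by
  have hm' : (1:ℝ) ≤ (m:ℝ) := by exact_mod_cast hm
  have h1 : (0:ℝ) < (1+y)^2 := by positivity
  have h2 : (0:ℝ) ≤ 2*(m:ℝ)*(n:ℝ)*y*(1+y) := by positivity
  have h3 : (0:ℝ) ≤ (n:ℝ)*((n:ℝ)+1)*y^2 := by positivity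
  have hm0 : (0:ℝ) < (m:ℝ) := by linarith
  have h4 : (0:ℝ) < (m:ℝ)*((m:ℝ)+1)*(1+y)^2 := mul_pos (mul_pos hm0 (by linarith)) h1
  simp only [WW]
  linarith

lemma gg_lam : gg m n lam mu lam = 0 := by
  simp [gg, Imns, intervalIntegral.integral_same]

lemma gg_cont : Continuous (gg m n lam mu) := by
  have : ∀ x, HasDerivAt (gg m n lam mu) (G1 m n mu x) x := gg_hasDeriv m n lam mu
  exact continuous_iff_continuousAt.2 fun x => (this x).continuousAt

lemma pow1x_eq {n : ℕ} (hn : 1 ≤ n) (t : ℝ) : (1+t)^n = (1+t)^(n-1)*(1+t) := by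
  conv_lhs => rw [show n = (n-1)+1 from (Nat.succ_pred_eq_of_pos hn).symm]
  rw [pow_succ]

lemma gg_nonneg (hn : 1 ≤ n) (hmu : 0 ≤ mu) (h : mu*(1+lam) ≤ (n:ℝ)) {x : ℝ}
    (hx : 0 < x) (hxl : x ≤ lam) : 0 ≤ gg m n lam mu x := by
  have hc1 : Continuous (fun t : ℝ => t ^ m * (1 + t) ^ n) := by continuity
  have hc2 : Continuous (fun t : ℝ => t ^ m * (1 + t) ^ (n-1)) := by continuity
  have e1 : Imns m n lam x = -Imns m n x lam := by
    rw [Imns, Imns, intervalIntegral.integral_symm]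
  have e2 : Imns m (n-1) lam x = -Imns m (n-1) x lam := by
    rw [Imns, Imns, intervalIntegral.integral_symm]
  rw [gg, e1, e2]
  have key : mu * Imns m n x lam - (n:ℝ) * Imns m (n-1) x lam ≤ 0 := by
    have h1 : mu * Imns m n x lam = ∫ t in x..lam, mu * (t^m*(1+t)^n) := by
      rw [Imns, intervalIntegral.integral_const_mul]
    have h2 : (n:ℝ) * Imns m (n-1) x lam = ∫ t in x..lam, (n:ℝ) * (t^m*(1+t)^(n-1)) := by
      rw [Imns, intervalIntegral.integral_const_mul]
    rw [h1, h2, ← intervalIntegral.integral_sub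
      ((continuous_const.fun_mul hc1).intervalIntegrable _ _) ((continuous_const.fun_mul hc2).intervalIntegrable _ _)]
    have : (∫ t in x..lam, (mu * (t^m*(1+t)^n) - (n:ℝ) * (t^m*(1+t)^(n-1))))
        ≤ ∫ _t in x..lam, (0:ℝ) := by
      apply intervalIntegral.integral_mono_on hxl
        (((continuous_const.fun_mul hc1).fun_sub (continuous_const.fun_mul hc2)).intervalIntegrable _ _)
        intervalIntegrable_const
      intro t ht
      have ht0 : 0 < t := lt_of_lt_of_le hx ht.1
      have hmun : mu*(1+t) ≤ (n:ℝ) := by nlinarith [ht.2]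
      have hnn : (0:ℝ) ≤ t^m * (1+t)^(n-1) := by positivity
      have := mul_nonpos_of_nonneg_of_nonpos hnn (by linarith : mu*(1+t) - (n:ℝ) ≤ 0)
      have expand : mu * (t^m*(1+t)^n) - (n:ℝ)*(t^m*(1+t)^(n-1))
          = t^m*(1+t)^(n-1)*(mu*(1+t) - (n:ℝ)) := by rw [pow1x_eq hn t]; ring
      rw [expand]
      linarith [this]
    simpa using this
  linarith

lemma hkey (hn : 1 ≤ n) (hlam : 0 ≤ lam) (hmu : 0 ≤ mu) (h : mu*(1+lam) ≤ (n:ℝ))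
    {x : ℝ} (hx : 0 < x) :
    VV m n mu x * dd m n x ≤ WW m n x * (gg m n lam mu x + dd m n x) := by
  rcases Nat.eq_zero_or_pos m with hm | hm
  · -- m = 0 : the auxiliary function K3 is constant
    subst hm
    set K3 : ℝ → ℝ := fun y => ((n:ℝ)+1)*(gg 0 n lam mu y + (1+y)^n) - mu*(1+y)^(n+1) with hK3def
    have hK3 : ∀ y : ℝ, HasDerivAt K3 0 y := by
      intro y
      have h1 := (gg_hasDeriv 0 n lam mu y).fun_add (pow_deriv2 n y)
      have h2 := pow_deriv2 (n+1) y
      have h3 := (h1.const_mul ((n:ℝ)+1)).fun_sub (h2.const_mul mu)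
      convert! h3 using 1
      simp only [G1, pow_zero, Nat.add_sub_cancel]
      push_cast
      ring
    have hconst : K3 x = K3 lam :=
      is_const_of_deriv_eq_zero (fun y => (hK3 y).differentiableAt)
        (fun y => (hK3 y).deriv) x lam
    have hK3lam : 0 ≤ K3 x := by
      rw [hconst, hK3def]
      simp only [gg_lam]
      have : ((n:ℝ)+1)*(0 + (1+lam)^n) - mu*(1+lam)^(n+1)
          = (1+lam)^n * (((n:ℝ)+1) - mu*(1+lam)) := by rw [pow_succ]; ring
      rw [this]
      have h1 : (0:ℝ) ≤ (1+lam)^n := by positivity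
      have h2 : (0:ℝ) ≤ ((n:ℝ)+1) - mu*(1+lam) := by
        have : (1:ℝ) ≤ (n:ℝ) := by exact_mod_cast hn
        linarith
      positivity
    have hA : 0 ≤ ((n:ℝ)+1)*(gg 0 n lam mu x + (1+x)^n) - mu*(1+x)^(n+1) := hK3lam
    simp only [VV, WW, dd, pow_zero, one_mul, Nat.cast_zero, zero_mul, mul_zero, zero_add,
      add_zero]
    have hps : (1+x)^(n+1) = (1+x)^n*(1+x) := pow_succ _ _
    rw [hps] at hA
    have hfac : 0 ≤ (n:ℝ)*x^2 := by positivity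
    nlinarith [mul_nonneg hfac hA]
  · -- m ≥ 1
    have hm' : 1 ≤ m := hm
    rcases le_or_gt x lam with hxl | hlx
    · -- x ≤ lam : use gg ≥ 0 and VV ≤ WW
      have hg := gg_nonneg m n lam mu hn hmu h hx hxl
      have hVW := WV_le m n mu (le_of_lt hx) hmu (by nlinarith : mu*(1+x) ≤ (n:ℝ))
      have hd : 0 ≤ dd m n x := by rw [dd]; positivity
      have hW : 0 ≤ WW m n x := (WW_pos m n hm' hx.le).le
      calc VV m n mu x * dd m n x ≤ WW m n x * dd m n x := mul_le_mul_of_nonneg_right hVW hd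
        _ ≤ WW m n x * (gg m n lam mu x + dd m n x) := by
            apply mul_le_mul_of_nonneg_left _ hW
            linarith
    · -- lam < x : monotone K2 argument
      set B : ℝ → ℝ := fun y => VV m n mu y / WW m n y with hBdef
      set K2 : ℝ → ℝ := fun y => gg m n lam mu y + dd m n y - B y * dd m n y with hK2def
      have hWne : ∀ y : ℝ, lam ≤ y → WW m n y ≠ 0 :=
        fun y hy => (WW_pos m n hm' (le_trans hlam hy)).ne'
      have hK2deriv : ∀ y : ℝ, lam < y → HasDerivAt K2
          (G1 m n mu y + D1 m n y -
            (((VV' m n mu y * WW m n y - VV m n mu y * WW' m n y)/(WW m n y)^2) * dd m n y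
              + B y * D1 m n y)) y := by
        intro y hy
        exact ((gg_hasDeriv m n lam mu y).fun_add (dd_hasDeriv m n y)).fun_sub
          ((((VV_hasDeriv m n mu y).fun_div (WW_hasDeriv m n y) (hWne y hy.le))).fun_mul
            (dd_hasDeriv m n y))
      have hK2nonneg : ∀ y : ℝ, lam < y → 0 ≤ G1 m n mu y + D1 m n y -
          (((VV' m n mu y * WW m n y - VV m n mu y * WW' m n y)/(WW m n y)^2) * dd m n y
            + B y * D1 m n y) := by
        intro y hy
        have hy0 : (0:ℝ) < y := lt_of_le_of_lt hlam hy
        have hy1 : (0:ℝ) < 1 + y := by linarith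
        have hWpos := WW_pos m n hm' hy0.le
        have hid : G1 m n mu y + D1 m n y -
            (((VV' m n mu y * WW m n y - VV m n mu y * WW' m n y)/(WW m n y)^2) * dd m n y
              + B y * D1 m n y)
            = y^m*(1+y)^n * (2*(m:ℝ)*(n:ℝ)*(((m:ℝ)+(n:ℝ)+1)-mu) * (y^2*(1+y)^2))
              / (y*(1+y)*(WW m n y)^2) := by
          simp only [hBdef, G1, D1, dd]
          rw [epow m hy0.ne', epow n hy1.ne']
          simp only [VV, VV', WW, WW']
          field_simp
          ring
        rw [hid]
        have hmu_n : mu ≤ (n:ℝ) := by nlinarith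
        have hfac : (0:ℝ) ≤ ((m:ℝ)+(n:ℝ)+1) - mu := by
          have h1 : (0:ℝ) ≤ (m:ℝ) := Nat.cast_nonneg m
          linarith
        positivity
      have hmono : MonotoneOn K2 (Ici lam) := by
        apply monotoneOn_of_deriv_nonneg (convex_Ici lam)
        · intro y hy
          have : ContinuousWithinAt (fun y => B y * dd m n y) (Ici lam) y := by
            apply ContinuousWithinAt.mul
            · exact ((VV_hasDeriv m n mu y).continuousAt.continuousWithinAt).div
                ((WW_hasDeriv m n y).continuousAt.continuousWithinAt) (hWne y hy)
            · exact (dd_hasDeriv m n y).continuousAt.continuousWithinAt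
          exact (((gg_hasDeriv m n lam mu y).continuousAt.continuousWithinAt).add
            ((dd_hasDeriv m n y).continuousAt.continuousWithinAt)).sub this
        · rw [interior_Ici]
          intro y hy
          exact (hK2deriv y hy).differentiableAt.differentiableWithinAt
        · rw [interior_Ici]
          intro y hy
          rw [(hK2deriv y hy).deriv]
          exact hK2nonneg y hy
      have hK2lam : 0 ≤ K2 lam := by
        simp only [hK2def, hBdef, gg_lam, zero_add]
        have hd : 0 ≤ dd m n lam := by rw [dd]; positivity
        have hVW := WV_le m n mu hlam hmu h
        have hWpos := WW_pos m n hm' hlam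
        have hB1 : VV m n mu lam / WW m n lam ≤ 1 := (div_le_one hWpos).2 hVW
        nlinarith [mul_le_mul_of_nonneg_right hB1 hd]
      have hK2x : 0 ≤ K2 x := le_trans hK2lam (hmono self_mem_Ici (le_of_lt hlx) hlx.le)
      have hWpos := WW_pos m n hm' (le_trans hlam hlx.le)
      have h1 : (VV m n mu x / WW m n x) * dd m n x ≤ gg m n lam mu x + dd m n x := by
        simp only [hK2def, hBdef] at hK2x
        linarith
      rw [div_mul_eq_mul_div, div_le_iff₀ hWpos] at h1
      linarith [h1]

/-- second derivative of `G1` -/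
noncomputable def G2 (x : ℝ) : ℝ := mu * D1 m n x -
  ((n:ℝ)*(((n-1:ℕ)):ℝ)*(1+x)^(n-1-1)*x^m + (n:ℝ)*(1+x)^(n-1)*((m:ℝ)*x^(m-1)))

/-- second derivative of `dd` -/
noncomputable def D2 (x : ℝ) : ℝ :=
  ((m:ℝ)*(((m-1:ℕ)):ℝ)*x^(m-1-1)*(1+x)^n + (m:ℝ)*x^(m-1)*((n:ℝ)*(1+x)^(n-1))) +
  ((n:ℝ)*(((n-1:ℕ)):ℝ)*(1+x)^(n-1-1)*x^m + (n:ℝ)*(1+x)^(n-1)*((m:ℝ)*x^(m-1)))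

lemma G1_hasDeriv (x : ℝ) : HasDerivAt (G1 m n mu) (G2 m n mu x) x := by
  have h1 := ((hasDerivAt_pow m x).fun_mul (pow_deriv2 n x)).const_mul mu
  have h2 := ((pow_deriv2 (n-1) x).fun_mul (hasDerivAt_pow m x)).const_mul (n:ℝ)
  have h3 := h1.fun_sub h2
  unfold G1 G2 D1
  convert! h3 using 1
  all_goals first
    | (ext y; ring)
    | ring

lemma D1_hasDeriv (x : ℝ) : HasDerivAt (D1 m n) (D2 m n x) x := by
  have h1 := ((hasDerivAt_pow (m-1) x).const_mul (m:ℝ)).fun_mul (pow_deriv2 n x)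
  have h2 := ((pow_deriv2 (n-1) x).const_mul (n:ℝ)).fun_mul (hasDerivAt_pow m x)
  have h3 := h1.fun_add h2
  unfold D1 D2
  convert! h3 using 1
  all_goals first
    | (ext y; ring)
    | ring

lemma conv_main (hn : 1 ≤ n) (hlam : 0 ≤ lam) (hmu : 0 ≤ mu) (h : mu*(1+lam) ≤ (n:ℝ)) :
    ConvexOn ℝ (Ioi (0:ℝ)) (fun x => gg m n lam mu x / dd m n x) := by
  have hddpos : ∀ x : ℝ, 0 < x → 0 < dd m n x := fun x hx => by
    rw [dd]; positivity
  set f1 : ℝ → ℝ := fun x =>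
    (G1 m n mu x * dd m n x - gg m n lam mu x * D1 m n x)/(dd m n x)^2 with hf1def
  have hf1 : ∀ x : ℝ, 0 < x → HasDerivAt (fun y => gg m n lam mu y / dd m n y) (f1 x) x :=
    fun x hx => (gg_hasDeriv m n lam mu x).div (dd_hasDeriv m n x) (hddpos x hx).ne'
  set f2 : ℝ → ℝ := fun x =>
    ((G2 m n mu x * dd m n x - gg m n lam mu x * D2 m n x)*(dd m n x)^2 -
      (G1 m n mu x * dd m n x - gg m n lam mu x * D1 m n x)*(2*dd m n x*D1 m n x)) /
        ((dd m n x)^2)^2 with hf2def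
  have hf2 : ∀ x : ℝ, 0 < x → HasDerivAt f1 (f2 x) x := by
    intro x hx
    have hnum : HasDerivAt (fun y => G1 m n mu y * dd m n y - gg m n lam mu y * D1 m n y)
        (G2 m n mu x * dd m n x - gg m n lam mu x * D2 m n x) x := by
      have := ((G1_hasDeriv m n mu x).fun_mul (dd_hasDeriv m n x)).fun_sub
        ((gg_hasDeriv m n lam mu x).fun_mul (D1_hasDeriv m n x))
      convert! this using 1
      all_goals ring
    have hden : HasDerivAt (fun y => (dd m n y)^2) (2*dd m n x*D1 m n x) x := by
      have := (dd_hasDeriv m n x).fun_pow 2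
      convert! this using 1
      all_goals norm_num
      all_goals ring
    exact hnum.div hden (pow_ne_zero 2 (hddpos x hx).ne')
  have hf2nonneg : ∀ x : ℝ, 0 < x → 0 ≤ f2 x := by
    intro x hx
    have hx1 : (0:ℝ) < 1 + x := by linarith
    have hNd : 0 ≤ (G2 m n mu x * dd m n x - gg m n lam mu x * D2 m n x)*(dd m n x)^2 -
        (G1 m n mu x * dd m n x - gg m n lam mu x * D1 m n x)*(2*dd m n x*D1 m n x) := by
      have hidd : (G2 m n mu x * dd m n x - gg m n lam mu x * D2 m n x)*(dd m n x)^2 -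
          (G1 m n mu x * dd m n x - gg m n lam mu x * D1 m n x)*(2*dd m n x*D1 m n x)
          = (dd m n x)^3 * (WW m n x * (gg m n lam mu x + dd m n x) - VV m n mu x * dd m n x)
            / (x^2*(1+x)^2) := by
        simp only [G1, G2, D1, D2, dd, VV, WW]
        rw [epow m hx.ne', epow n hx1.ne', epow2 m hx.ne', epow2 n hx1.ne']
        field_simp
        ring
      rw [hidd]
      apply div_nonneg _ (by positivity)

      apply mul_nonneg (pow_nonneg (hddpos x hx).le 3)
      have := hkey m n lam mu hn hlam hmu h hx
      linarith
    rw [hf2def]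
    dsimp only
    exact div_nonneg hNd (by positivity)
  apply convexOn_of_deriv2_nonneg (convex_Ioi 0)
  · intro x hx
    exact ((gg_hasDeriv m n lam mu x).continuousAt.continuousWithinAt).div
      ((dd_hasDeriv m n x).continuousAt.continuousWithinAt) (hddpos x hx).ne'
  · rw [interior_Ioi]
    intro x hx
    exact (hf1 x hx).differentiableAt.differentiableWithinAt
  · rw [interior_Ioi]
    intro x hx
    have hev : deriv (fun y => gg m n lam mu y / dd m n y) =ᶠ[nhds x] f1 :=
      Filter.eventuallyEq_of_mem (isOpen_Ioi.mem_nhds hx) (fun y hy => (hf1 y hy).deriv)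
    exact (((hf2 x hx).congr_of_eventuallyEq hev).differentiableAt).differentiableWithinAt
  · rw [interior_Ioi]
    intro x hx
    have hev : deriv (fun y => gg m n lam mu y / dd m n y) =ᶠ[nhds x] f1 :=
      Filter.eventuallyEq_of_mem (isOpen_Ioi.mem_nhds hx) (fun y hy => (hf1 y hy).deriv)
    have h2 : deriv^[2] (fun y => gg m n lam mu y / dd m n y) x
        = deriv (deriv (fun y => gg m n lam mu y / dd m n y)) x := by
      simp [Function.iterate_succ, Function.comp]
    rw [h2, ((hf2 x hx).congr_of_eventuallyEq hev).deriv]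
    exact hf2nonneg x hx


lemma ff_lam : gg m n lam mu lam / dd m n lam = 0 := by
  rw [gg_lam]; simp

/-- bound near 0 in the case lam = 0 -/
lemma ff_small (hmu : 0 ≤ mu) {u : ℝ} (hu : 0 < u) :
    gg m n 0 mu u / dd m n u ≤ mu * u := by
  have hdu : 0 < dd m n u := by rw [dd]; positivity
  rw [div_le_iff₀ hdu]
  have hc1 : Continuous (fun t : ℝ => t ^ m * (1 + t) ^ n) := by continuity
  have hc2 : Continuous (fun t : ℝ => t ^ m * (1 + t) ^ (n-1)) := by continuity
  have hI2 : 0 ≤ Imns m (n-1) 0 u := by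
    rw [Imns]
    apply intervalIntegral.integral_nonneg hu.le
    intro t ht
    have : (0:ℝ) ≤ t := ht.1
    positivity
  have hI1 : Imns m n 0 u ≤ u * (u^m * (1+u)^n) := by
    rw [Imns]
    have hmono : (∫ t in (0:ℝ)..u, t ^ m * (1 + t) ^ n)
        ≤ ∫ _t in (0:ℝ)..u, u^m * (1+u)^n := by
      apply intervalIntegral.integral_mono_on hu.le (hc1.intervalIntegrable _ _)
        intervalIntegrable_const
      intro t ht
      have h0t : (0:ℝ) ≤ t := ht.1
      have h1 : t^m ≤ u^m := pow_le_pow_left₀ h0t ht.2 m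
      have h2 : (1+t)^n ≤ (1+u)^n := pow_le_pow_left₀ (by linarith) (by linarith [ht.2]) n
      have h3 : (0:ℝ) ≤ t^m := by positivity
      nlinarith [pow_nonneg (by linarith : (0:ℝ) ≤ 1+t) n]
    calc (∫ t in (0:ℝ)..u, t ^ m * (1 + t) ^ n) ≤ ∫ _t in (0:ℝ)..u, u^m * (1+u)^n := hmono
      _ = u * (u^m * (1+u)^n) := by
          rw [intervalIntegral.integral_const, smul_eq_mul, sub_zero]
  have : gg m n 0 mu u ≤ mu * (u * (u^m*(1+u)^n)) := by
    rw [gg]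
    have h1 : mu * Imns m n 0 u ≤ mu * (u * (u^m*(1+u)^n)) := mul_le_mul_of_nonneg_left hI1 hmu
    have h2 : 0 ≤ (n:ℝ) * Imns m (n-1) 0 u := mul_nonneg (Nat.cast_nonneg n) hI2
    linarith
  rw [dd]
  linarith

theorem main_result (hn : 1 ≤ n) (hlam : 0 ≤ lam) (hmu : 0 ≤ mu) (h : mu*(1+lam) ≤ (n:ℝ)) :
    ConvexOn ℝ (Ioi (0:ℝ)) (fun x => gg m n lam mu x / dd m n x) ∧
    ∀ a b : ℝ, lam < a → 0 < b → gg m n lam mu a / dd m n a = b → b ≤ a →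
      ∀ x ∈ Icc lam a, gg m n lam mu x / dd m n x ≤ (b / a) * x := by
  have hconv := conv_main m n lam mu hn hlam hmu h
  refine ⟨hconv, ?_⟩
  intro a b hla hb hfa hba
  have ha : 0 < a := lt_of_le_of_lt hlam hla
  intro x hx
  rcases eq_or_lt_of_le hx.2 with rfl | hxa
  · rw [hfa, div_mul_cancel₀ _ ha.ne']
  · -- x < a
    rcases eq_or_lt_of_le hlam with hlam0 | hlampos
    · -- lam = 0
      subst hlam0
      rcases eq_or_lt_of_le hx.1 with rfl | hx0
      · rw [ff_lam]
        positivity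
      · -- 0 < x < a : limit argument
        have hgoal : gg m n 0 mu x / dd m n x ≤ b/a*x := by
          have hlim : Filter.Tendsto (fun u : ℝ => b + ((mu*u - b)/(u - a))*(x-a))
              (nhdsWithin 0 (Ioi 0)) (nhds (b/a*x)) := by
            have hc : ContinuousAt (fun u : ℝ => b + ((mu*u - b)/(u - a))*(x-a)) 0 := by
              apply ContinuousAt.add continuousAt_const
              apply ContinuousAt.mul _ continuousAt_const
              apply ContinuousAt.div
              · fun_prop
              · fun_prop
              · simp [ha.ne']
            have hval : b + ((mu*0 - b)/((0:ℝ) - a))*(x-a) = b/a*x := by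
              field_simp
              ring_nf
              field_simp
              ring
            have := hc.tendsto.mono_left
              (nhdsWithin_le_nhds : nhdsWithin (0:ℝ) (Ioi 0) ≤ nhds 0)
            rwa [hval] at this
          apply ge_of_tendsto hlim
          filter_upwards [Ioo_mem_nhdsGT_of_mem (Set.left_mem_Ico.2 hx0)] with u hu
          have hu0 : 0 < u := hu.1
          have hux : u ≤ x := hu.2.le
          have hxa' : x - a < 0 := by linarith
          have hua : u - a < 0 := by linarith
          have hsec := hconv.secant_mono (mem_Ioi.2 ha) (mem_Ioi.2 hu0) (mem_Ioi.2 hx0)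
            (by linarith : u ≠ a) (by linarith : x ≠ a) hux
          rw [hfa] at hsec
          have h1 : gg m n 0 mu x / dd m n x - b
              ≤ ((gg m n 0 mu u / dd m n u - b)/(u-a)) * (x-a) :=
            (le_div_iff_of_neg hxa').mp hsec
          have hFu : gg m n 0 mu u / dd m n u ≤ mu * u := ff_small m n mu hmu hu0
          have h2 : (mu*u - b)/(u-a) ≤ (gg m n 0 mu u / dd m n u - b)/(u-a) := by
            have hq : 0 ≤ (gg m n 0 mu u / dd m n u - mu*u)/(u-a) :=
              div_nonneg_of_nonpos (by linarith) hua.le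
            have heq : (gg m n 0 mu u / dd m n u - b)/(u-a) - (mu*u - b)/(u-a)
                = (gg m n 0 mu u / dd m n u - mu*u)/(u-a) := by
              rw [div_sub_div_same,
                show (gg m n 0 mu u / dd m n u - b) - (mu*u - b)
                  = gg m n 0 mu u / dd m n u - mu*u from by ring]
            linarith
          have h3 : ((gg m n 0 mu u / dd m n u - b)/(u-a)) * (x-a)
              ≤ ((mu*u - b)/(u-a)) * (x-a) :=
            mul_le_mul_of_nonpos_right h2 hxa'.le
          linarith
        exact hgoal
    · -- 0 < lam
      have hsec := hconv.secant_mono (mem_Ioi.2 ha) (mem_Ioi.2 hlampos)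
        (mem_Ioi.2 (lt_of_lt_of_le hlampos hx.1)) (by linarith : lam ≠ a)
        (by linarith : x ≠ a) hx.1
      rw [hfa, ff_lam] at hsec
      have hxa' : x - a < 0 := by linarith
      have h1 : gg m n lam mu x / dd m n x - b ≤ ((0 - b)/(lam-a)) * (x-a) :=
        (le_div_iff_of_neg hxa').mp hsec
      have h2 : ((0 - b)/(lam-a)) * (x-a) ≤ b/a*x - b := by
        rw [show ((0:ℝ) - b)/(lam-a) = b/(a-lam) by rw [← neg_div_neg_eq]; ring_nf]
        rw [show b/a*x - b = b*(x-a)/a from by field_simp]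
        rw [div_mul_eq_mul_div, div_le_div_iff₀ (by linarith : (0:ℝ) < a - lam) ha]
        nlinarith [mul_nonneg (mul_nonneg hb.le hlam) (by linarith [hxa.le] : (0:ℝ) ≤ a - x)]
      linarith

end main

/-- Let `m ≥ 0`, `n ≥ 1` be integers and `λ ≥ 0`, `μ ≥ 0` reals with `μ(1+λ) ≤ n`.
Then `x ↦ (μ I_{m,n,λ}(x) - n I_{m,n-1,λ}(x)) / (xᵐ(1+x)ⁿ)` is convex on `(0,∞)`.
Consequently, if `a > λ` and `b > 0` are such that this function takes the value `b`
at `x = a` and `b ≤ a`, then it is bounded above by `(b/a)x` on `[λ,a]`. -/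
theorem stmt_5 (m n : ℕ) (hn : 1 ≤ n) (lam mu : ℝ) (hlam : 0 ≤ lam) (hmu : 0 ≤ mu)
    (h : mu * (1 + lam) ≤ n) :
    let f : ℝ → ℝ := fun x =>
      (mu * Imns m n lam x - (n : ℝ) * Imns m (n - 1) lam x) / (x ^ m * (1 + x) ^ n)
    ConvexOn ℝ (Set.Ioi (0:ℝ)) f ∧
    ∀ a b : ℝ, lam < a → 0 < b → f a = b → b ≤ a →
      ∀ x ∈ Set.Icc lam a, f x ≤ (b / a) * x := by
  intro f
  have hmain := main_result m n lam mu hn hlam hmu (by exact_mod_cast h)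
  exact hmain
end

section
/- Let $m\ge0$, $n\ge1$ be integers and $a>0$, $b>0$ reals with $\mu_0\le n$, and let $\lambda\in[0,a)$ be the unique real with $\mu_\lambda(1+\lambda)=n$. Then for every $s\in(0,a)$ with $s\ne\lambda$ and every $x\in(0,a)$, $\tilde\psi_s(x)<\tilde\psi_\lambda(x)$. -/
/-- The slope `μ_s = ((1+a)ⁿ aᵐ b + n I_{m,n-1,s}(a)) / I_{m,n,s}(a)`. -/
noncomputable def muS (m n : ℕ) (a b s : ℝ) : ℝ :=
  ((1 + a) ^ n * a ^ m * b + (n : ℝ) * Imns m (n - 1) s a) / Imns m n s a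

/-- The solution `ψ̃_s(x) = (μ_s I_{m,n,s}(x) - n I_{m,n-1,s}(x)) / ((1+x)ⁿ xᵐ)`. -/
noncomputable def psiS (m n : ℕ) (a b s x : ℝ) : ℝ :=
  (muS m n a b s * Imns m n s x - (n : ℝ) * Imns m (n - 1) s x) / ((1 + x) ^ n * x ^ m)

lemma contf (m n : ℕ) : Continuous (fun t : ℝ => t ^ m * (1 + t) ^ n) := by continuity

lemma Imns_sub (m n : ℕ) (s x : ℝ) : Imns m n s x = Imns m n 0 x - Imns m n 0 s := by
  have h := intervalIntegral.integral_add_adjacent_intervals (μ := MeasureTheory.volume)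
    ((contf m n).intervalIntegrable 0 s) ((contf m n).intervalIntegrable s x)
  unfold Imns; linarith

lemma hasDeriv_I (m n : ℕ) (x : ℝ) :
    HasDerivAt (fun y => Imns m n 0 y) (x ^ m * (1 + x) ^ n) x := by
  unfold Imns
  exact intervalIntegral.integral_hasDerivAt_right ((contf m n).intervalIntegrable 0 x)
    ((contf m n).stronglyMeasurableAtFilter _ _) (contf m n).continuousAt

lemma I_pos (m n : ℕ) {s x : ℝ} (hs : 0 ≤ s) (hsx : s < x) : 0 < Imns m n s x := by
  apply intervalIntegral.intervalIntegral_pos_of_pos_on ((contf m n).intervalIntegrable s x)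
  · intro t ht
    have h1 : 0 < t := lt_of_le_of_lt hs ht.1
    positivity
  · exact hsx

/-- Let `m ≥ 0`, `n ≥ 1` be integers and `a, b > 0` reals with `μ_0 ≤ n`, and let
`λ ∈ [0,a)` be the unique real with `μ_λ(1+λ) = n`. Then for every `s ∈ (0,a)` with
`s ≠ λ` and every `x ∈ (0,a)`, `ψ̃_s(x) < ψ̃_λ(x)`. -/
theorem stmt_8 (m n : ℕ) (hn : 1 ≤ n) (a b : ℝ) (ha : 0 < a) (hb : 0 < b)
    (h0 : muS m n a b 0 ≤ n) (lam : ℝ) (hlam : lam ∈ Set.Ico (0:ℝ) a)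
    (hlameq : muS m n a b lam * (1 + lam) = n) :
    ∀ s ∈ Set.Ioo (0:ℝ) a, s ≠ lam → ∀ x ∈ Set.Ioo (0:ℝ) a,
      psiS m n a b s x < psiS m n a b lam x := by
  set P : ℝ → ℝ := fun x => Imns m n 0 x with hP
  set Q : ℝ → ℝ := fun x => Imns m (n-1) 0 x with hQ
  set C : ℝ := (1 + a) ^ n * a ^ m * b with hC
  set N : ℝ → ℝ := fun s => C + (n:ℝ) * Q a - (n:ℝ) * Q s with hN
  set D : ℝ → ℝ := fun s => P a - P s with hD
  set H : ℝ → ℝ := fun s => (1 + s) * N s - (n:ℝ) * D s with hH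
  set mu : ℝ → ℝ := fun s => N s / D s with hmu
  have key : ∀ s : ℝ, (1 + s) ^ (n-1) * (1 + s) = (1 + s) ^ n := by
    intro s; rw [← pow_succ]; congr 1; omega
  -- positivity of D and N on [0, a)
  have hDpos : ∀ s ∈ Set.Ico (0:ℝ) a, 0 < D s := by
    intro s hs
    have := I_pos m n hs.1 hs.2
    rw [Imns_sub] at this
    simpa [hD] using this
  have hNpos : ∀ s ∈ Set.Ico (0:ℝ) a, 0 < N s := by
    intro s hs
    have h1 := I_pos m (n-1) hs.1 hs.2
    rw [Imns_sub] at h1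
    have hC0 : 0 < C := by have := ha; positivity
    have h2 : 0 < Q a - Q s := h1
    have h3 : (0:ℝ) ≤ (n:ℝ) * (Q a - Q s) := mul_nonneg (Nat.cast_nonneg n) h2.le
    simp only [hN]
    linarith
  -- muS rewritten
  have hmuS : ∀ s : ℝ, muS m n a b s = mu s := by
    intro s
    unfold muS
    rw [Imns_sub m n s a, Imns_sub m (n-1) s a]
    simp only [hmu, hN, hD, hP, hQ, hC]
    ring_nf
  -- derivatives
  have hN' : ∀ s : ℝ, HasDerivAt N (-((n:ℝ) * (s ^ m * (1 + s) ^ (n-1)))) s := by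
    intro s
    have h1 : HasDerivAt (fun y => (n:ℝ) * Q y) ((n:ℝ) * (s ^ m * (1 + s) ^ (n-1))) s :=
      (hasDeriv_I m (n-1) s).const_mul _
    have h2 := h1.const_sub (C + (n:ℝ) * Q a)
    convert h2 using 2 <;> ring
  have hD' : ∀ s : ℝ, HasDerivAt D (-(s ^ m * (1 + s) ^ n)) s := by
    intro s
    exact (hasDeriv_I m n s).const_sub (P a)
  have hH' : ∀ s : ℝ, HasDerivAt H (N s) s := by
    intro s
    have h1 : HasDerivAt (fun y : ℝ => (1 + y)) 1 s := (hasDerivAt_id s).const_add 1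
    have h2 := (h1.mul (hN' s)).sub ((hD' s).const_mul (n:ℝ))
    refine h2.congr_deriv ?_
    linear_combination (-((n:ℝ) * s ^ m)) * key s
  have hmu' : ∀ s : ℝ, D s ≠ 0 →
      HasDerivAt mu (s ^ m * (1 + s) ^ (n-1) * H s / (D s) ^ 2) s := by
    intro s hs
    have h := (hN' s).div (hD' s) hs
    refine h.congr_deriv ?_
    congr 1
    simp only [hH]
    linear_combination (-(s ^ m * N s)) * key s
  -- H strictly monotone on [0, a]
  have hHcont : Continuous H := by
    have : ∀ s, ContinuousAt H s := fun s => (hH' s).continuousAt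
    exact continuous_iff_continuousAt.2 this
  have hHmono : StrictMonoOn H (Set.Icc 0 a) := by
    apply strictMonoOn_of_deriv_pos (convex_Icc 0 a) hHcont.continuousOn
    intro s hs
    rw [interior_Icc] at hs
    rw [(hH' s).deriv]
    exact hNpos s ⟨hs.1.le, hs.2⟩
  -- H lam = 0
  have hDlam : 0 < D lam := hDpos lam hlam
  have hHlam : H lam = 0 := by
    rw [hmuS] at hlameq
    have : N lam / D lam * (1 + lam) = (n:ℝ) := hlameq
    have h2 : (1 + lam) * N lam = (n:ℝ) * D lam := by
      field_simp at this
      linarith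
    simp only [hH]
    linarith
  -- mu strictly monotone on [lam, a)
  have hmuMono : StrictMonoOn mu (Set.Ico lam a) := by
    apply strictMonoOn_of_deriv_pos (convex_Ico lam a)
    · intro s hs
      exact ((hmu' s (hDpos s ⟨hlam.1.trans hs.1, hs.2⟩).ne').continuousAt).continuousWithinAt
    · intro s hs
      rw [interior_Ico] at hs
      rw [(hmu' s (hDpos s ⟨hlam.1.trans hs.1.le, hs.2⟩).ne').deriv]
      have hs0 : 0 < s := lt_of_le_of_lt hlam.1 hs.1
      have hHs : 0 < H s := by
        have := hHmono ⟨hlam.1, hlam.2.le⟩ ⟨hlam.1.trans hs.1.le, hs.2.le⟩ hs.1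
        linarith [hHlam]
      have hDs : 0 < D s := hDpos s ⟨hs0.le, hs.2⟩
      positivity
  -- mu strictly antitone on [0, lam]
  have hmuAnti : StrictAntiOn mu (Set.Icc 0 lam) := by
    apply strictAntiOn_of_deriv_neg (convex_Icc 0 lam)
    · intro s hs
      exact ((hmu' s (hDpos s ⟨hs.1, lt_of_le_of_lt hs.2 hlam.2⟩).ne').continuousAt).continuousWithinAt
    · intro s hs
      rw [interior_Icc] at hs
      rw [(hmu' s (hDpos s ⟨hs.1.le, hs.2.trans hlam.2⟩).ne').deriv]
      have hHs : H s < 0 := by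
        have := hHmono ⟨hs.1.le, (hs.2.trans hlam.2).le⟩ ⟨hlam.1, hlam.2.le⟩ hs.2
        linarith [hHlam]
      have hDs : 0 < D s := hDpos s ⟨hs.1.le, hs.2.trans hlam.2⟩
      have h1 : 0 < s ^ m * (1 + s) ^ (n-1) := by
        have := hs.1; positivity
      have h2 : 0 < (D s)^2 := by positivity
      exact div_neg_of_neg_of_pos (by nlinarith) h2
  intro s hs hsne x hx
  have hDs : 0 < D s := hDpos s ⟨hs.1.le, hs.2⟩
  -- mu lam < mu s
  have hmulam : mu lam < mu s := by
    rcases lt_or_gt_of_ne hsne with h | h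
    · exact hmuAnti ⟨hs.1.le, h.le⟩ ⟨hlam.1, le_refl _⟩ h
    · exact hmuMono ⟨le_refl _, hlam.2⟩ ⟨h.le, hs.2⟩ h
  -- rewrite psiS
  have hDx : 0 < (1 + x) ^ n * x ^ m := by
    have := hx.1; positivity
  have hpsi : ∀ s' : ℝ, D s' ≠ 0 →
      psiS m n a b s' x =
        (mu s' * (P x - P a) + C + (n:ℝ) * Q a - (n:ℝ) * Q x) / ((1 + x) ^ n * x ^ m) := by
    intro s' hDs'
    have hmul : mu s' * D s' = N s' := div_mul_cancel₀ _ hDs'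
    unfold psiS
    rw [hmuS s', Imns_sub m n s' x, Imns_sub m (n-1) s' x]
    congr 1
    simp only [hN, hD] at hmul ⊢
    linear_combination hmul
  have hPx : P x < P a := by
    have := I_pos m n hx.1.le hx.2
    rw [Imns_sub] at this
    linarith
  rw [hpsi s hDs.ne', hpsi lam hDlam.ne']
  have hnum : mu s * (P x - P a) + C + (n:ℝ) * Q a - (n:ℝ) * Q x <
      mu lam * (P x - P a) + C + (n:ℝ) * Q a - (n:ℝ) * Q x := by nlinarith
  exact div_lt_div_of_pos_right hnum hDx
end

section
/- Let $m\ge0$, $n\ge1$ be integers, $a>0$, $b>0$ reals with $\mu_0\le n$, let $\lambda\in[0,a)$ be the unique real with $\mu_\lambda(1+\lambda)=n$, and define $\tilde\psi:[0,a]\to\mathbb{R}$ by $\tilde\psi(x)=0$ for $x\in[0,\lambda]$ and $\tilde\psi(x)=\tilde\psi_\lambda(x)$ for $x\in[\lambda,a]$. Let $Q:[0,b]\to[0,\infty)$ be continuous, and let $\psi:[0,a]\times[0,\infty)\to[0,b]$ be continuous, with $\partial_t\psi$, $\partial_x\psi$, $\partial_x^2\psi$ continuous on $(0,a)\times(0,\infty)$,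 satisfying there the $J$-flow equation $\partial_t\psi = Q(\psi)\Big(\partial_x^2\psi + \big(\tfrac{m}{x}+\tfrac{n}{1+x}\big)\partial_x\psi - \big(\tfrac{m}{x^2}+\tfrac{n}{(1+x)^2}\big)\psi - \tfrac{n}{(1+x)^2}\Big)$, with $\psi(0,t)=0$, $\psi(a,t)=b$ for all $t\ge0$ and $\psi(x,0)=\tfrac{b}{a}x$. Then $\psi(x,t)\ge\tilde\psi(x)$ for all $(x,t)\in[0,a]\times[0,\infty)$. -/
open Set Filter Topology MeasureTheory intervalIntegral

lemma ftc_cont {f : ℝ → ℝ} (hf : Continuous f) (s x : ℝ) :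
    HasDerivAt (fun y => ∫ t in s..y, f t) (f x) x :=
  intervalIntegral.integral_hasDerivAt_right (hf.intervalIntegrable _ _)
    (hf.stronglyMeasurableAtFilter _ _) hf.continuousAt

/-- `F(x) = ∫_λ^x t^m (1+t)^{n-1} (t-λ) dt`. -/
noncomputable def Fint (m n : ℕ) (lam x : ℝ) : ℝ :=
  ∫ t in lam..x, t ^ m * (1 + t) ^ (n - 1) * (t - lam)

lemma contFintegrand (m n : ℕ) (lam : ℝ) :
    Continuous fun t : ℝ => t ^ m * (1 + t) ^ (n - 1) * (t - lam) := by fun_prop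

lemma hasDerivAt_Fint (m n : ℕ) (lam x : ℝ) :
    HasDerivAt (Fint m n lam) (x ^ m * (1 + x) ^ (n - 1) * (x - lam)) x :=
  ftc_cont (contFintegrand m n lam) lam x

lemma continuous_Fint (m n : ℕ) (lam : ℝ) : Continuous (Fint m n lam) :=
  continuous_iff_continuousAt.2 fun x => (hasDerivAt_Fint m n lam x).continuousAt

/-- Numerator identity: if `μ(1+λ) = n` then `μ I_n - n I_{n-1} = μ F`. -/
lemma numer_eq (m n : ℕ) (hn : 1 ≤ n) {μ lam : ℝ} (hμ : μ * (1 + lam) = n) (x : ℝ) :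
    μ * Imns m n lam x - (n : ℝ) * Imns m (n - 1) lam x = μ * Fint m n lam x := by
  unfold Imns Fint
  have h1 : IntervalIntegrable (fun t : ℝ => μ * (t ^ m * (1 + t) ^ n)) volume lam x :=
    (by fun_prop : Continuous fun t : ℝ => μ * (t ^ m * (1 + t) ^ n)).intervalIntegrable _ _
  have h2 : IntervalIntegrable (fun t : ℝ => (n:ℝ) * (t ^ m * (1 + t) ^ (n-1))) volume lam x :=
    (by fun_prop : Continuous fun t : ℝ => (n:ℝ) * (t ^ m * (1 + t) ^ (n-1))).intervalIntegrable _ _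
  rw [← intervalIntegral.integral_const_mul, ← intervalIntegral.integral_const_mul,
    ← intervalIntegral.integral_const_mul, ← intervalIntegral.integral_sub h1 h2]
  refine intervalIntegral.integral_congr fun t _ => ?_
  have hp : (1 + t) ^ n = (1 + t) ^ (n - 1) * (1 + t) := by
    conv_lhs => rw [← Nat.succ_pred_eq_of_pos hn]
    rw [pow_succ, Nat.pred_eq_sub_one]
  rw [hp]
  linear_combination (t ^ m * (1 + t) ^ (n - 1)) * hμ

lemma hasDerivAt_pow_div (k : ℕ) {x : ℝ} (hx : x ≠ 0) :
    HasDerivAt (fun y : ℝ => y ^ k) ((k : ℝ) * x ^ k / x) x := by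
  have h := hasDerivAt_pow k x
  convert h using 1
  · rfl
  rcases Nat.eq_zero_or_pos k with hk | hk
  · simp [hk]
  · rw [← Nat.succ_pred_eq_of_pos hk, pow_succ]
    field_simp
    ring
    rw [Nat.succ_sub_one]

lemma hasDerivAt_one_add_pow (k : ℕ) {x : ℝ} (hx : (1:ℝ) + x ≠ 0) :
    HasDerivAt (fun y : ℝ => (1 + y) ^ k) ((k : ℝ) * (1 + x) ^ k / (1 + x)) x := by
  have h := (hasDerivAt_pow_div k hx).comp x ((hasDerivAt_id x).const_add 1)
  simpa [Function.comp_def] using h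

/-- `g = μ F / ((1+x)^n x^m)`. -/
noncomputable def Gfun (m n : ℕ) (μ lam x : ℝ) : ℝ :=
  μ * Fint m n lam x / ((1 + x) ^ n * x ^ m)

/-- first derivative of `Gfun`. -/
noncomputable def Gfun1 (m n : ℕ) (μ lam x : ℝ) : ℝ :=
  μ * (x ^ m * (1 + x) ^ (n - 1) * (x - lam)) / ((1 + x) ^ n * x ^ m)
    - ((m : ℝ) / x + (n : ℝ) / (1 + x)) * Gfun m n μ lam x

/-- second derivative of `Gfun`. -/
noncomputable def Gfun2 (m n : ℕ) (μ lam x : ℝ) : ℝ :=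
  μ * ((((m : ℝ) * x ^ m / x) * (1 + x) ^ (n - 1) * (x - lam)
        + x ^ m * (((n - 1 : ℕ) : ℝ) * (1 + x) ^ (n - 1) / (1 + x)) * (x - lam)
        + x ^ m * (1 + x) ^ (n - 1)) * ((1 + x) ^ n * x ^ m)
      - x ^ m * (1 + x) ^ (n - 1) * (x - lam)
        * ((1 + x) ^ n * x ^ m * ((m : ℝ) / x + (n : ℝ) / (1 + x))))
    / ((1 + x) ^ n * x ^ m) ^ 2
  + ((m : ℝ) / x ^ 2 + (n : ℝ) / (1 + x) ^ 2) * Gfun m n μ lam x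
  - ((m : ℝ) / x + (n : ℝ) / (1 + x)) * Gfun1 m n μ lam x

lemma denom_ne (n m : ℕ) {x : ℝ} (hx : 0 < x) : ((1 + x) ^ n * x ^ m : ℝ) ≠ 0 := by
  positivity

lemma hasDerivAt_denom (n m : ℕ) {x : ℝ} (hx : 0 < x) :
    HasDerivAt (fun y : ℝ => (1 + y) ^ n * y ^ m)
      ((1 + x) ^ n * x ^ m * ((m : ℝ) / x + (n : ℝ) / (1 + x))) x := by
  have h1x : (1:ℝ) + x ≠ 0 := by positivity
  have h := (hasDerivAt_one_add_pow n h1x).mul (hasDerivAt_pow_div m hx.ne')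
  refine h.congr_deriv ?_
  field_simp
  ring

lemma hasDerivAt_Gfun (m n : ℕ) (μ lam : ℝ) {x : ℝ} (hx : 0 < x) :
    HasDerivAt (Gfun m n μ lam) (Gfun1 m n μ lam x) x := by
  have h1x : (1:ℝ) + x ≠ 0 := by positivity
  have hu : HasDerivAt (fun y => μ * Fint m n lam y)
      (μ * (x ^ m * (1 + x) ^ (n - 1) * (x - lam))) x :=
    (hasDerivAt_Fint m n lam x).const_mul μ
  have h := hu.div (hasDerivAt_denom n m hx) (denom_ne n m hx)
  refine h.congr_deriv ?_
  unfold Gfun1 Gfun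
  field_simp

lemma hasDerivAt_Gfun1 (m n : ℕ) (μ lam : ℝ) {x : ℝ} (hx : 0 < x) :
    HasDerivAt (fun y => Gfun1 m n μ lam y) (Gfun2 m n μ lam x) x := by
  have h1x : (1:ℝ) + x ≠ 0 := by positivity
  -- derivative of the first quotient
  have hE : HasDerivAt (fun y : ℝ => μ * (y ^ m * (1 + y) ^ (n - 1) * (y - lam)))
      (μ * (((m : ℝ) * x ^ m / x) * (1 + x) ^ (n - 1) * (x - lam)
        + x ^ m * (((n - 1 : ℕ) : ℝ) * (1 + x) ^ (n - 1) / (1 + x)) * (x - lam)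
        + x ^ m * (1 + x) ^ (n - 1))) x := by
    have h := (((hasDerivAt_pow_div m hx.ne').mul (hasDerivAt_one_add_pow (n-1) h1x)).mul
      ((hasDerivAt_id x).sub_const lam)).const_mul μ
    refine h.congr_deriv ?_
    simp only [id_eq, Pi.mul_apply]
    ring
  have hq := hE.div (hasDerivAt_denom n m hx) (denom_ne n m hx)
  -- derivative of β
  have hβ : HasDerivAt (fun y : ℝ => (m : ℝ) / y + (n : ℝ) / (1 + y))
      (-((m : ℝ) / x ^ 2 + (n : ℝ) / (1 + x) ^ 2)) x := by
    have hm : HasDerivAt (fun y : ℝ => (m : ℝ) / y) (-((m:ℝ) / x ^ 2)) x := by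
      simpa [div_eq_mul_inv, sq] using ((hasDerivAt_inv hx.ne').const_mul (m:ℝ))
    have hn' : HasDerivAt (fun y : ℝ => (n : ℝ) / (1 + y)) (-((n:ℝ) / (1 + x) ^ 2)) x := by
      have := ((hasDerivAt_inv h1x).comp x ((hasDerivAt_id x).const_add 1)).const_mul (n:ℝ)
      simpa [div_eq_mul_inv, sq] using this
    refine (hm.add hn').congr_deriv ?_
    ring
  have hprod := hβ.mul (hasDerivAt_Gfun m n μ lam hx)
  have h := hq.sub hprod
  refine h.congr_deriv ?_
  unfold Gfun2
  ring

lemma ODE_Gfun (m n : ℕ) (hn : 1 ≤ n) (μ lam : ℝ) {x : ℝ} (hx : 0 < x) :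
    Gfun2 m n μ lam x + ((m : ℝ) / x + (n : ℝ) / (1 + x)) * Gfun1 m n μ lam x
      - ((m : ℝ) / x ^ 2 + (n : ℝ) / (1 + x) ^ 2) * Gfun m n μ lam x
      = μ * (1 + lam) / (1 + x) ^ 2 := by
  have h1x : (0:ℝ) < 1 + x := by positivity
  have hA : (x:ℝ) ^ m ≠ 0 := by positivity
  have hB : ((1:ℝ) + x) ^ (n - 1) ≠ 0 := by positivity
  have hc : ((n - 1 : ℕ) : ℝ) = (n : ℝ) - 1 := by
    push_cast [Nat.cast_sub hn]; ring
  have hp : ((1:ℝ) + x) ^ n = (1 + x) ^ (n - 1) * (1 + x) := by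
    conv_lhs => rw [← Nat.succ_pred_eq_of_pos hn]
    rw [pow_succ, Nat.pred_eq_sub_one]
  unfold Gfun2
  rw [hc, hp]
  field_simp
  ring

lemma Imns_pos (m n : ℕ) {lam a : ℝ} (h0 : 0 ≤ lam) (hla : lam < a) :
    0 < Imns m n lam a := by
  refine intervalIntegral.integral_pos hla ((by fun_prop : Continuous fun t : ℝ =>
    t ^ m * (1 + t) ^ n).continuousOn) (fun t ht => ?_) ⟨a, ⟨by linarith, le_refl _⟩, ?_⟩
  · have h1 : 0 < t := lt_of_le_of_lt h0 ht.1
    positivity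
  · have h2 : 0 < a := lt_of_le_of_lt h0 hla
    positivity

lemma psiS_a (m n : ℕ) (hn : 1 ≤ n) {a b lam : ℝ} (ha : 0 < a) (h0 : 0 ≤ lam) (hla : lam < a) :
    psiS m n a b lam a = b := by
  have hI : Imns m n lam a ≠ 0 := (Imns_pos m n h0 hla).ne'
  unfold psiS muS
  rw [div_mul_cancel₀ _ hI]
  have hD : ((1:ℝ) + a) ^ n * a ^ m ≠ 0 := by positivity
  field_simp
  ring

lemma Fint_nonneg (m n : ℕ) {lam x : ℝ} (h0 : 0 ≤ lam) (hx : lam ≤ x) :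
    0 ≤ Fint m n lam x := by
  refine intervalIntegral.integral_nonneg hx fun t ht => ?_
  have h1 : 0 ≤ t := le_trans h0 ht.1
  have h2 : lam ≤ t := ht.1
  have : 0 ≤ t - lam := by linarith
  exact mul_nonneg (by positivity) this

/-- `p(y) = y^{m+1}(1+y)^n` and its derivative. -/
noncomputable def Pfun (m n : ℕ) (y : ℝ) : ℝ := y ^ (m + 1) * (1 + y) ^ n
noncomputable def Pderiv (m n : ℕ) (t : ℝ) : ℝ :=
  ((m + 1 : ℕ) : ℝ) * t ^ m * (1 + t) ^ n + t ^ (m + 1) * ((n : ℝ) * (1 + t) ^ (n - 1))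

lemma hasDerivAt_Pfun (m n : ℕ) (t : ℝ) : HasDerivAt (Pfun m n) (Pderiv m n t) t := by
  have h1 : HasDerivAt (fun y : ℝ => y ^ (m+1)) (((m+1 : ℕ):ℝ) * t ^ m) t := by
    simpa using hasDerivAt_pow (m+1) t
  have h2 : HasDerivAt (fun y : ℝ => (1 + y) ^ n) ((n:ℝ) * (1 + t) ^ (n-1)) t := by
    have := (hasDerivAt_pow n (1 + t)).comp t ((hasDerivAt_id t).const_add 1)
    simpa [Function.comp_def] using this
  refine (h1.mul h2).congr_deriv ?_
  simp [Pderiv]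

lemma Pderiv_factor (m n : ℕ) (hn : 1 ≤ n) (t : ℝ) :
    Pderiv m n t = t ^ m * (1 + t) ^ (n - 1) * (((m:ℝ) + 1) * (1 + t) + (n:ℝ) * t) := by
  have hp : ((1:ℝ) + t) ^ n = (1 + t) ^ (n - 1) * (1 + t) := by
    conv_lhs => rw [← Nat.succ_pred_eq_of_pos hn]
    rw [pow_succ, Nat.pred_eq_sub_one]
  unfold Pderiv
  rw [hp, pow_succ]
  push_cast
  ring

lemma continuous_Pderiv (m n : ℕ) : Continuous (Pderiv m n) := by
  unfold Pderiv; fun_prop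

lemma Fint_mul_le (m n : ℕ) (hn : 1 ≤ n) {lam y : ℝ} (h0 : 0 ≤ lam) (hy : lam ≤ y) :
    Fint m n lam y * (((m:ℝ) + 1) * (1 + y) + (n:ℝ) * y)
      ≤ (y - lam) * (Pfun m n y - Pfun m n lam) := by
  have hmono : (∫ t in lam..y, (t ^ m * (1 + t) ^ (n - 1) * (t - lam))
        * (((m:ℝ) + 1) * (1 + y) + (n:ℝ) * y))
      ≤ ∫ t in lam..y, (y - lam) * Pderiv m n t := by
    refine intervalIntegral.integral_mono_on hy
      ((by fun_prop : Continuous fun t : ℝ => (t ^ m * (1 + t) ^ (n - 1) * (t - lam))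
        * (((m:ℝ) + 1) * (1 + y) + (n:ℝ) * y)).intervalIntegrable _ _)
      ((continuous_const.mul (continuous_Pderiv m n)).intervalIntegrable _ _)
      fun t ht => ?_
    rw [Pderiv_factor m n hn t]
    have h1 : 0 ≤ t := le_trans h0 ht.1
    have h2 : lam ≤ t := ht.1
    have h3 : t ≤ y := ht.2
    have key : (t - lam) * (((m:ℝ) + 1) * (1 + y) + (n:ℝ) * y)
        ≤ (y - lam) * (((m:ℝ) + 1) * (1 + t) + (n:ℝ) * t) := by
      have hm0 : (0:ℝ) ≤ (m:ℝ) := Nat.cast_nonneg m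
      have hn0 : (0:ℝ) ≤ (n:ℝ) := Nat.cast_nonneg n
      nlinarith [mul_nonneg (mul_nonneg hm0 h0) (sub_nonneg.2 h3),
        mul_nonneg h0 (sub_nonneg.2 h3), mul_nonneg hn0 (mul_nonneg h0 (sub_nonneg.2 h3))]
    have hA : 0 ≤ t ^ m * (1 + t) ^ (n - 1) := by positivity
    calc t ^ m * (1 + t) ^ (n - 1) * (t - lam) * (((m:ℝ) + 1) * (1 + y) + (n:ℝ) * y)
        = t ^ m * (1 + t) ^ (n - 1) * ((t - lam) * (((m:ℝ) + 1) * (1 + y) + (n:ℝ) * y)) := by ring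
      _ ≤ t ^ m * (1 + t) ^ (n - 1) * ((y - lam) * (((m:ℝ) + 1) * (1 + t) + (n:ℝ) * t)) :=
          mul_le_mul_of_nonneg_left key hA
      _ = (y - lam) * (t ^ m * (1 + t) ^ (n - 1) * (((m:ℝ) + 1) * (1 + t) + (n:ℝ) * t)) := by ring
  rw [intervalIntegral.integral_mul_const, intervalIntegral.integral_const_mul,
    intervalIntegral.integral_eq_sub_of_hasDerivAt
      (fun t _ => hasDerivAt_Pfun m n t)
      ((continuous_Pderiv m n).intervalIntegrable _ _)] at hmono
  exact hmono

lemma psiS_rep (m n : ℕ) (hn : 1 ≤ n) {a b lam : ℝ}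
    (hμeq : muS m n a b lam * (1 + lam) = (n : ℝ)) (x : ℝ) :
    psiS m n a b lam x = muS m n a b lam * Fint m n lam x / ((1 + x) ^ n * x ^ m) := by
  unfold psiS
  rw [numer_eq m n hn hμeq x]

lemma lemA (m n : ℕ) (hn : 1 ≤ n) {a b lam : ℝ} (ha : 0 < a) (h0 : 0 ≤ lam) (hla : lam < a)
    (hμeq : muS m n a b lam * (1 + lam) = (n : ℝ)) {x : ℝ} (hx : lam < x) (hxa : x ≤ a) :
    psiS m n a b lam x ≤ b / a * x := by
  have hx0 : 0 < x := lt_of_le_of_lt h0 hx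
  set μ := muS m n a b lam with hμdef
  have hμpos : 0 < μ := by
    have h1 : (0:ℝ) < 1 + lam := by linarith
    have h2 : (0:ℝ) < (n:ℝ) := by exact_mod_cast hn
    nlinarith
  have hPpos : ∀ y : ℝ, 0 < y → 0 < Pfun m n y := fun y hy => by
    unfold Pfun; positivity
  -- monotonicity of Kf = F / p on [x, a]
  have hcross : Fint m n lam x * Pfun m n a ≤ Fint m n lam a * Pfun m n x := by
    have hKmono : Fint m n lam x / Pfun m n x ≤ Fint m n lam a / Pfun m n a := by
      rcases eq_or_lt_of_le hxa with h | hxa'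
      · rw [h]
      set Kf : ℝ → ℝ := fun y => Fint m n lam y / Pfun m n y with hKfdef
      have hKd : ∀ y ∈ Ioo x a, HasDerivAt Kf
          ((y ^ m * (1 + y) ^ (n-1) * (y - lam) * Pfun m n y
            - Fint m n lam y * Pderiv m n y) / (Pfun m n y) ^ 2) y := fun y hy =>
        (hasDerivAt_Fint m n lam y).div (hasDerivAt_Pfun m n y)
          (hPpos y (hx0.trans hy.1)).ne'
      have hKc : ContinuousOn Kf (Icc x a) := by
        refine ContinuousOn.div (continuous_Fint m n lam).continuousOn
          (by unfold Pfun; fun_prop) (fun y hy => (hPpos y (lt_of_lt_of_le hx0 hy.1)).ne')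
      have hmono := monotoneOn_of_deriv_nonneg (convex_Icc x a) hKc ?_ ?_
      · exact hmono ⟨le_refl x, hxa⟩ ⟨hxa, le_refl a⟩ hxa
      · rw [interior_Icc]
        exact fun y hy => ((hKd y hy).differentiableAt).differentiableWithinAt
      · rw [interior_Icc]
        intro y hy
        rw [(hKd y hy).deriv]
        have hy0 : 0 < y := hx0.trans hy.1
        have hylam : lam ≤ y := (hx.trans hy.1).le
        have hppos := hPpos y hy0
        have hnum : Fint m n lam y * Pderiv m n y
            ≤ y ^ m * (1 + y) ^ (n-1) * (y - lam) * Pfun m n y := by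
          have hΔpos : 0 < ((m:ℝ) + 1) * (1 + y) + (n:ℝ) * y := by positivity
          have hA0 : (0:ℝ) ≤ y ^ m * (1 + y) ^ (n-1) := by positivity
          have h1 := Fint_mul_le m n hn h0 hylam
          have hplam : 0 ≤ Pfun m n lam := by unfold Pfun; positivity
          have h2 : Fint m n lam y * (((m:ℝ) + 1) * (1 + y) + (n:ℝ) * y)
              ≤ (y - lam) * Pfun m n y := by nlinarith [hPpos y hy0]
          rw [Pderiv_factor m n hn y]
          calc Fint m n lam y * (y ^ m * (1 + y) ^ (n-1) * (((m:ℝ) + 1) * (1 + y) + (n:ℝ) * y))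
              = (y ^ m * (1 + y) ^ (n-1)) * (Fint m n lam y * (((m:ℝ) + 1) * (1 + y) + (n:ℝ) * y)) := by
                ring
            _ ≤ (y ^ m * (1 + y) ^ (n-1)) * ((y - lam) * Pfun m n y) :=
                mul_le_mul_of_nonneg_left h2 hA0
            _ = y ^ m * (1 + y) ^ (n-1) * (y - lam) * Pfun m n y := by ring
        have : 0 ≤ y ^ m * (1 + y) ^ (n-1) * (y - lam) * Pfun m n y
            - Fint m n lam y * Pderiv m n y := by linarith
        positivity
    rw [div_le_div_iff₀ (hPpos x hx0) (hPpos a ha)] at hKmono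
    exact hKmono
  -- conclude
  have hbeq : b = μ * Fint m n lam a / ((1 + a) ^ n * a ^ m) := by
    rw [← psiS_a m n hn ha h0 hla (b := b), psiS_rep m n hn hμeq]
  rw [psiS_rep m n hn hμeq, ← hμdef, hbeq]
  have hr : μ * Fint m n lam a / ((1 + a) ^ n * a ^ m) / a * x
      = μ * Fint m n lam a * x / ((1 + a) ^ n * a ^ m * a) := by ring
  rw [hr, div_le_div_iff₀ (by positivity) (by positivity)]
  have hexp : Pfun m n a = a ^ m * a * (1 + a) ^ n := by unfold Pfun; ring
  have hexp2 : Pfun m n x = x ^ m * x * (1 + x) ^ n := by unfold Pfun; ring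
  have h3 := mul_le_mul_of_nonneg_left hcross hμpos.le
  rw [hexp, hexp2] at h3
  calc μ * Fint m n lam x * ((1 + a) ^ n * a ^ m * a)
      = μ * (Fint m n lam x * (a ^ m * a * (1 + a) ^ n)) := by ring
    _ ≤ μ * (Fint m n lam a * (x ^ m * x * (1 + x) ^ n)) := h3
    _ = μ * Fint m n lam a * x * ((1 + x) ^ n * x ^ m) := by ring

lemma Fint_le (m n : ℕ) {lam x : ℝ} (h0 : 0 ≤ lam) (hx : lam ≤ x) :
    Fint m n lam x ≤ (x - lam) * (x ^ m * (1 + x) ^ (n-1) * (x - lam)) := by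
  have h := intervalIntegral.integral_mono_on hx
    ((contFintegrand m n lam).intervalIntegrable _ _)
    (_root_.intervalIntegrable_const (μ := MeasureTheory.volume) (c := x ^ m * (1 + x) ^ (n-1) * (x - lam)))
    (fun t ht => ?_)
  · rw [intervalIntegral.integral_const, smul_eq_mul] at h
    exact h
  · have h1 : 0 ≤ t := le_trans h0 ht.1
    have h2 : t ≤ x := ht.2
    have h3 : lam ≤ t := ht.1
    have hx0 : (0:ℝ) ≤ x := le_trans h0 hx
    have h1x : (0:ℝ) ≤ 1 + x := by linarith
    gcongr <;> first
      | exact pow_nonneg hx0 m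
      | exact mul_nonneg (pow_nonneg hx0 m) (pow_nonneg h1x (n-1))
      | linarith

lemma psiS_bounds (m n : ℕ) (hn : 1 ≤ n) {a b lam : ℝ} (h0 : 0 ≤ lam)
    (hμeq : muS m n a b lam * (1 + lam) = (n : ℝ)) {y : ℝ} (hy : lam < y) :
    0 ≤ psiS m n a b lam y ∧ psiS m n a b lam y ≤ muS m n a b lam * (y - lam) ^ 2 := by
  have hy0 : 0 < y := lt_of_le_of_lt h0 hy
  have hμpos : 0 < muS m n a b lam := by
    have h1 : (0:ℝ) < 1 + lam := by linarith
    have h2 : (0:ℝ) < (n:ℝ) := by exact_mod_cast hn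
    nlinarith
  have hD : (0:ℝ) < (1 + y) ^ n * y ^ m := by positivity
  rw [psiS_rep m n hn hμeq]
  constructor
  · have := Fint_nonneg m n h0 hy.le
    positivity
  · rw [div_le_iff₀ hD]
    have hF := Fint_le m n h0 hy.le
    have hpow : ((1:ℝ) + y) ^ (n-1) ≤ (1 + y) ^ n :=
      pow_le_pow_right₀ (by linarith) (Nat.sub_le n 1)
    have h1 : Fint m n lam y ≤ (y - lam) ^ 2 * (y ^ m * (1 + y) ^ n) := by
      calc Fint m n lam y ≤ (y - lam) * (y ^ m * (1 + y) ^ (n-1) * (y - lam)) := hF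
        _ = (y - lam) ^ 2 * (y ^ m * (1 + y) ^ (n-1)) := by ring
        _ ≤ (y - lam) ^ 2 * (y ^ m * (1 + y) ^ n) := by
            have hp : ((1:ℝ) + y) ^ (n-1) ≤ (1 + y) ^ n :=
              pow_le_pow_right₀ (by linarith) (Nat.sub_le n 1)
            have hym : (0:ℝ) ≤ y ^ m := by positivity
            nlinarith [sq_nonneg (y - lam), mul_le_mul_of_nonneg_left hp hym]
    calc muS m n a b lam * Fint m n lam y
        ≤ muS m n a b lam * ((y - lam) ^ 2 * (y ^ m * (1 + y) ^ n)) := by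
          exact mul_le_mul_of_nonneg_left h1 hμpos.le
      _ = muS m n a b lam * (y - lam) ^ 2 * ((1 + y) ^ n * y ^ m) := by ring

lemma psiTil_contOn (m n : ℕ) (hn : 1 ≤ n) {a b lam : ℝ} (ha : 0 < a) (h0 : 0 ≤ lam)
    (hla : lam < a) (hμeq : muS m n a b lam * (1 + lam) = (n : ℝ)) :
    ContinuousOn (fun y => if y ≤ lam then (0:ℝ) else psiS m n a b lam y) (Set.Icc 0 a) := by
  have hμpos : 0 < muS m n a b lam := by
    have h1 : (0:ℝ) < 1 + lam := by linarith
    have h2 : (0:ℝ) < (n:ℝ) := by exact_mod_cast hn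
    nlinarith
  intro y hy
  rcases lt_trichotomy y lam with h | h | h
  · have hev : (fun z => if z ≤ lam then (0:ℝ) else psiS m n a b lam z) =ᶠ[𝓝 y]
        (fun _ => (0:ℝ)) := by
      filter_upwards [Iio_mem_nhds h] with z hz
      exact if_pos (le_of_lt hz)
    exact ((continuousAt_congr hev).2 continuousAt_const).continuousWithinAt
  · -- squeeze at lam
    subst h
    have hb : ∀ z, 0 ≤ (if z ≤ y then (0:ℝ) else psiS m n a b y z) ∧
        (if z ≤ y then (0:ℝ) else psiS m n a b y z) ≤ muS m n a b y * (z - y) ^ 2 := by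
      intro z
      by_cases hz : z ≤ y
      · simp only [if_pos hz]
        exact ⟨le_refl _, by positivity⟩
      · push_neg at hz
        simp only [if_neg (not_le.2 hz)]
        exact psiS_bounds m n hn h0 hμeq hz
    have hcw : ContinuousWithinAt (fun z => if z ≤ y then (0:ℝ) else psiS m n a b y z)
        (Set.Icc 0 a) y := by
      unfold ContinuousWithinAt
      have h00 : ((fun z => if z ≤ y then (0:ℝ) else psiS m n a b y z) y) = 0 := by simp
      rw [h00]
      have hg : Tendsto (fun z => muS m n a b y * (z - y) ^ 2) (𝓝[Set.Icc 0 a] y) (𝓝 0) := by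
        have hc : Tendsto (fun z => muS m n a b y * (z - y) ^ 2) (𝓝 y)
            (𝓝 (muS m n a b y * (y - y) ^ 2)) :=
          (Continuous.tendsto (by fun_prop) y)
        simpa using hc.mono_left nhdsWithin_le_nhds
      exact squeeze_zero (fun z => (hb z).1) (fun z => (hb z).2) hg
    exact hcw
  · have hy0 : 0 < y := lt_of_le_of_lt h0 h
    have hcA : ContinuousAt (fun z => muS m n a b lam * Fint m n lam z
        / ((1 + z) ^ n * z ^ m)) y := by
      apply ContinuousAt.div
      · exact (continuous_const.mul (continuous_Fint m n lam)).continuousAt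
      · fun_prop
      · positivity
    have hev : (fun z => if z ≤ lam then (0:ℝ) else psiS m n a b lam z) =ᶠ[𝓝 y]
        (fun z => muS m n a b lam * Fint m n lam z / ((1 + z) ^ n * z ^ m)) := by
      filter_upwards [Ioi_mem_nhds h] with z hz
      rw [if_neg (not_le.2 hz), psiS_rep m n hn hμeq]
    exact ((continuousAt_congr hev).2 hcA).continuousWithinAt
lemma deriv_nonpos_of_min_left {f : ℝ → ℝ} {d t0 : ℝ} (ht0 : 0 < t0)
    (hf : HasDerivAt f d t0) (hmin : ∀ τ ∈ Set.Icc (0:ℝ) t0, f t0 ≤ f τ) : d ≤ 0 := by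
  have hs : Tendsto (slope f t0) (𝓝[<] t0) (𝓝 d) :=
    (hasDerivAt_iff_tendsto_slope.1 hf).mono_left
      (nhdsWithin_mono t0 (fun y hy => ne_of_lt hy))
  have hmem : Ioo 0 t0 ∈ 𝓝[<] t0 := Ioo_mem_nhdsLT_of_mem ⟨ht0, le_refl _⟩
  refine le_of_tendsto hs (Filter.eventually_of_mem hmem ?_)
  intro τ hτ
  have h1 : f t0 ≤ f τ := hmin τ ⟨hτ.1.le, hτ.2.le⟩
  have : slope f t0 τ = (f τ - f t0) / (τ - t0) := slope_def_field f t0 τ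
  rw [this]
  apply div_nonpos_of_nonneg_of_nonpos (by linarith) (by linarith [hτ.2])

lemma second_deriv_nonneg_of_min {w v : ℝ → ℝ} {p q x0 D : ℝ} (hx0 : x0 ∈ Set.Ioo p q)
    (hw : ∀ y ∈ Set.Ioo p q, HasDerivAt w (v y) y)
    (hv : HasDerivAt v D x0) (hv0 : v x0 = 0)
    (hmin : ∀ y ∈ Set.Ioo p q, w x0 ≤ w y) : 0 ≤ D := by
  by_contra hD
  push_neg at hD
  have hs : Tendsto (slope v x0) (𝓝[>] x0) (𝓝 D) :=
    (hasDerivAt_iff_tendsto_slope.1 hv).mono_left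
      (nhdsWithin_mono x0 (fun y hy => ne_of_gt hy))
  have hev : ∀ᶠ y in 𝓝[>] x0, slope v x0 y < 0 := hs.eventually (eventually_lt_nhds hD)
  rw [eventually_iff, mem_nhdsGT_iff_exists_Ioo_subset] at hev
  obtain ⟨u, hu, hsub⟩ := hev
  -- pick y' between x0 and min u q
  set y' := (x0 + min u q) / 2 with hy'
  have hxu : x0 < u := hu
  have hxq : x0 < q := hx0.2
  have h1 : x0 < min u q := lt_min hxu hxq
  have hy1 : x0 < y' := by simp only [hy']; linarith
  have hy2 : y' < min u q := by simp only [hy']; linarith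
  have hyu : y' < u := hy2.trans_le (min_le_left _ _)
  have hyq : y' < q := hy2.trans_le (min_le_right _ _)
  have hsubset : Icc x0 y' ⊆ Ioo p q := fun z hz => ⟨hx0.1.trans_le hz.1, lt_of_le_of_lt hz.2 hyq⟩
  have hcont : ContinuousOn w (Icc x0 y') := fun z hz =>
    ((hw z (hsubset hz)).continuousAt).continuousWithinAt
  have hderiv : ∀ z ∈ Ioo x0 y', HasDerivAt w (v z) z := fun z hz =>
    hw z (hsubset ⟨hz.1.le, hz.2.le⟩)
  obtain ⟨c, hc, hceq⟩ := exists_hasDerivAt_eq_slope w v hy1 hcont hderiv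
  have hvc : v c < 0 := by
    have hcmem : c ∈ Ioo x0 u := ⟨hc.1, hc.2.trans hyu⟩
    have := hsub hcmem
    have hslope : slope v x0 c = (v c - v x0) / (c - x0) := slope_def_field v x0 c
    rw [Set.mem_setOf_eq, hslope, hv0] at this
    have hcx : 0 < c - x0 := by linarith [hc.1]
    rcases div_neg_iff.1 this with ⟨_, h⟩ | ⟨h, _⟩ <;> linarith
  have hwy : w x0 ≤ w y' := hmin y' ⟨hx0.1.trans hy1, hyq⟩
  rw [hceq] at hvc
  have hpos : 0 < y' - x0 := by linarith
  rcases div_neg_iff.1 hvc with ⟨_, h⟩ | ⟨h, _⟩ <;> linarith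

/-- Comparison along the `J`-flow under the Calabi ansatz: suppose `μ_0 ≤ n`, let
`λ ∈ [0,a)` solve `μ_λ(1+λ) = n`, and set `ψ̃ = 0` on `[0,λ]`, `ψ̃ = ψ̃_λ` on `[λ,a]`.
If `ψ : [0,a] × [0,∞) → [0,b]` solves the reduced `J`-flow
`∂_t ψ = Q(ψ)(∂_x²ψ + (m/x + n/(1+x))∂_xψ - (m/x² + n/(1+x)²)ψ - n/(1+x)²)` with
`ψ(0,t) = 0`, `ψ(a,t) = b` and `ψ(x,0) = (b/a)x`, then `ψ(x,t) ≥ ψ̃(x)` everywhere. -/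
theorem stmt_11 (m n : ℕ) (hn : 1 ≤ n) (a b : ℝ) (ha : 0 < a) (hb : 0 < b)
    (h0 : muS m n a b 0 ≤ n) (lam : ℝ) (hlam : lam ∈ Set.Ico (0:ℝ) a)
    (hlameq : muS m n a b lam * (1 + lam) = n)
    (Q : ℝ → ℝ) (hQcont : ContinuousOn Q (Set.Icc 0 b))
    (hQnonneg : ∀ y ∈ Set.Icc (0:ℝ) b, 0 ≤ Q y)
    (ψ ψt ψx ψxx : ℝ → ℝ → ℝ)
    (hmaps : ∀ x ∈ Set.Icc (0:ℝ) a, ∀ t ∈ Set.Ici (0:ℝ), ψ x t ∈ Set.Icc 0 b)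
    (hcont : ContinuousOn (fun p : ℝ × ℝ => ψ p.1 p.2) (Set.Icc 0 a ×ˢ Set.Ici 0))
    (hψtd : ∀ x ∈ Set.Ioo (0:ℝ) a, ∀ t ∈ Set.Ioi (0:ℝ),
      HasDerivAt (fun τ => ψ x τ) (ψt x t) t)
    (hψxd : ∀ x ∈ Set.Ioo (0:ℝ) a, ∀ t ∈ Set.Ioi (0:ℝ),
      HasDerivAt (fun y => ψ y t) (ψx x t) x)
    (hψxxd : ∀ x ∈ Set.Ioo (0:ℝ) a, ∀ t ∈ Set.Ioi (0:ℝ),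
      HasDerivAt (fun y => ψx y t) (ψxx x t) x)
    (hψtc : ContinuousOn (fun p : ℝ × ℝ => ψt p.1 p.2) (Set.Ioo 0 a ×ˢ Set.Ioi 0))
    (hψxc : ContinuousOn (fun p : ℝ × ℝ => ψx p.1 p.2) (Set.Ioo 0 a ×ˢ Set.Ioi 0))
    (hψxxc : ContinuousOn (fun p : ℝ × ℝ => ψxx p.1 p.2) (Set.Ioo 0 a ×ˢ Set.Ioi 0))
    (hPDE : ∀ x ∈ Set.Ioo (0:ℝ) a, ∀ t ∈ Set.Ioi (0:ℝ),
      ψt x t = Q (ψ x t) *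
        (ψxx x t + ((m : ℝ) / x + (n : ℝ) / (1 + x)) * ψx x t
          - ((m : ℝ) / x ^ 2 + (n : ℝ) / (1 + x) ^ 2) * ψ x t - (n : ℝ) / (1 + x) ^ 2))
    (hbd0 : ∀ t ∈ Set.Ici (0:ℝ), ψ 0 t = 0)
    (hbda : ∀ t ∈ Set.Ici (0:ℝ), ψ a t = b)
    (hinit : ∀ x ∈ Set.Icc (0:ℝ) a, ψ x 0 = (b / a) * x) :
    ∀ x ∈ Set.Icc (0:ℝ) a, ∀ t ∈ Set.Ici (0:ℝ),
      (if x ≤ lam then (0:ℝ) else psiS m n a b lam x) ≤ ψ x t := by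
  obtain ⟨hlam0, hlama⟩ := hlam
  have hμeq : muS m n a b lam * (1 + lam) = (n:ℝ) := hlameq
  have hn0 : (0:ℝ) < (n:ℝ) := by exact_mod_cast hn
  have hμpos : 0 < muS m n a b lam := by nlinarith
  set μ := muS m n a b lam with hμdef
  set ψtil : ℝ → ℝ := fun y => if y ≤ lam then (0:ℝ) else psiS m n a b lam y with hψtildef
  have hψtilc : ContinuousOn ψtil (Set.Icc 0 a) :=
    psiTil_contOn m n hn ha hlam0 hlama hμeq
  have hψtil0 : ∀ y, y ≤ lam → ψtil y = 0 := fun y hy => if_pos hy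
  have hψtila : ψtil a = b := by
    rw [hψtildef]
    simp only [if_neg (not_le.2 hlama)]
    exact psiS_a m n hn ha hlam0 hlama
  have hψtilA : ∀ y ∈ Set.Icc (0:ℝ) a, ψtil y ≤ b / a * y := by
    intro y hy
    by_cases h : y ≤ lam
    · rw [hψtil0 y h]
      have : 0 ≤ y := hy.1
      positivity
    · push_neg at h
      rw [hψtildef]
      simp only [if_neg (not_le.2 h)]
      exact lemA m n hn ha hlam0 hlama hμeq h hy.2
  have hGeq : ∀ z, lam < z → ψtil z = Gfun m n μ lam z := by
    intro z hz
    rw [hψtildef]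
    simp only [if_neg (not_le.2 hz)]
    rw [psiS_rep m n hn hμeq]
    rfl
  intro x hx t ht
  have ht' : (0:ℝ) ≤ t := ht
  -- key claim via minimum principle
  have key : ∀ ε > (0:ℝ), 0 ≤ ψ x t - ψtil x + ε * t := by
    intro ε hε
    set K : Set (ℝ × ℝ) := Set.Icc 0 a ×ˢ Set.Icc 0 t with hKdef
    have hKc : IsCompact K := isCompact_Icc.prod isCompact_Icc
    have hKne : K.Nonempty := ⟨(0, 0), ⟨⟨le_refl _, ha.le⟩, ⟨le_refl _, ht⟩⟩⟩
    have hsub : K ⊆ Set.Icc 0 a ×ˢ Set.Ici 0 := fun p hp => ⟨hp.1, hp.2.1⟩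
    set u : ℝ × ℝ → ℝ := fun p => ψ p.1 p.2 - ψtil p.1 + ε * p.2 with hudef
    have hucont : ContinuousOn u K := by
      refine ((hcont.mono hsub).sub ?_).add ((continuous_const.mul continuous_snd).continuousOn)
      exact hψtilc.comp continuous_fst.continuousOn fun p hp => hp.1
    obtain ⟨p0, hp0K, hmin⟩ := hKc.exists_isMinOn hKne hucont
    have hminle : ∀ p ∈ K, u p0 ≤ u p := fun p hp => hmin hp
    suffices h0u : 0 ≤ u p0 by
      have := hminle (x, t) ⟨hx, ⟨ht, le_refl t⟩⟩
      simpa [hudef] using le_trans h0u this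
    by_contra hneg
    push_neg at hneg
    obtain ⟨x0, t0⟩ := p0
    have hx0I : x0 ∈ Set.Icc (0:ℝ) a := hp0K.1
    have ht0I : t0 ∈ Set.Icc (0:ℝ) t := hp0K.2
    simp only [hudef] at hneg
    -- x0 > lam
    have hlamx0 : lam < x0 := by
      by_contra hc
      push_neg at hc
      rw [hψtil0 x0 hc] at hneg
      have h1 := (hmaps x0 hx0I t0 ht0I.1).1
      nlinarith [ht0I.1]
    have hx00 : 0 < x0 := lt_of_le_of_lt hlam0 hlamx0
    -- x0 < a
    have hx0a : x0 < a := by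
      rcases lt_or_eq_of_le hx0I.2 with h | h
      · exact h
      · exfalso
        rw [h] at hneg
        rw [hbda t0 ht0I.1, hψtila] at hneg
        nlinarith [ht0I.1]
    -- t0 > 0
    have ht00 : 0 < t0 := by
      rcases lt_or_eq_of_le ht0I.1 with h | h
      · exact h
      · exfalso
        rw [← h] at hneg
        rw [hinit x0 hx0I] at hneg
        have := hψtilA x0 hx0I
        nlinarith
    have hx0Ioo : x0 ∈ Set.Ioo (0:ℝ) a := ⟨hx00, hx0a⟩
    have ht0Ioi : t0 ∈ Set.Ioi (0:ℝ) := ht00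
    -- time derivative inequality
    have hft : HasDerivAt (fun τ => ψ x0 τ - ψtil x0 + ε * τ) (ψt x0 t0 + ε) t0 := by
      have h1 := ((hψtd x0 hx0Ioo t0 ht0Ioi).sub_const (ψtil x0)).add
        ((hasDerivAt_id t0).const_mul ε)
      refine h1.congr_deriv ?_
      ring
    have htle : ψt x0 t0 + ε ≤ 0 := by
      refine deriv_nonpos_of_min_left ht00 hft fun τ hτ => ?_
      have hτK : (x0, τ) ∈ K := ⟨hx0I, ⟨hτ.1, le_trans hτ.2 ht0I.2⟩⟩
      have := hminle (x0, τ) hτK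
      simpa [hudef] using this
    -- spatial derivatives at minimum
    have hwd : ∀ y ∈ Set.Ioo lam a, HasDerivAt (fun z => ψ z t0 - Gfun m n μ lam z)
        (ψx y t0 - Gfun1 m n μ lam y) y := by
      intro y hy
      have hy0 : 0 < y := lt_of_le_of_lt hlam0 hy.1
      exact (hψxd y ⟨hy0, hy.2⟩ t0 ht0Ioi).sub (hasDerivAt_Gfun m n μ lam hy0)
    have hminw : ∀ y ∈ Set.Ioo lam a, (fun z => ψ z t0 - Gfun m n μ lam z) x0
        ≤ (fun z => ψ z t0 - Gfun m n μ lam z) y := by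
      intro y hy
      have hyK : (y, t0) ∈ K := ⟨⟨(lt_of_le_of_lt hlam0 hy.1).le, hy.2.le⟩, ht0I⟩
      have h1 := hminle (y, t0) hyK
      simp only [hudef] at h1
      show ψ x0 t0 - Gfun m n μ lam x0 ≤ ψ y t0 - Gfun m n μ lam y
      rw [← hGeq x0 hlamx0, ← hGeq y hy.1]
      linarith
    have hvx0 : ψx x0 t0 - Gfun1 m n μ lam x0 = 0 := by
      have hloc : IsLocalMin (fun z => ψ z t0 - Gfun m n μ lam z) x0 := by
        have hmem : Set.Ioo lam a ∈ 𝓝 x0 := Ioo_mem_nhds hlamx0 hx0a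
        exact Filter.eventually_of_mem hmem hminw
      exact hloc.hasDerivAt_eq_zero (hwd x0 ⟨hlamx0, hx0a⟩)
    have hvd : HasDerivAt (fun y => ψx y t0 - Gfun1 m n μ lam y)
        (ψxx x0 t0 - Gfun2 m n μ lam x0) x0 :=
      (hψxxd x0 hx0Ioo t0 ht0Ioi).sub (hasDerivAt_Gfun1 m n μ lam hx00)
    have hD2 : 0 ≤ ψxx x0 t0 - Gfun2 m n μ lam x0 :=
      second_deriv_nonneg_of_min ⟨hlamx0, hx0a⟩ hwd hvd hvx0 hminw
    -- ODE
    have hode : Gfun2 m n μ lam x0 + ((m:ℝ)/x0 + (n:ℝ)/(1+x0)) * Gfun1 m n μ lam x0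
        - ((m:ℝ)/x0^2 + (n:ℝ)/(1+x0)^2) * Gfun m n μ lam x0 = (n:ℝ)/(1+x0)^2 := by
      rw [ODE_Gfun m n hn μ lam hx00, ← hμeq]
    -- value comparison
    have hval : ψ x0 t0 - Gfun m n μ lam x0 < 0 := by
      rw [← hGeq x0 hlamx0]
      nlinarith [mul_nonneg hε.le ht0I.1]
    have hcpos : 0 < (m:ℝ)/x0^2 + (n:ℝ)/(1+x0)^2 := by
      have h1 : (0:ℝ) ≤ (m:ℝ)/x0^2 := by positivity
      have h2 : (0:ℝ) < (n:ℝ)/(1+x0)^2 := by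
        have : (0:ℝ) < 1 + x0 := by linarith
        positivity
      linarith
    -- bracket positive
    have hbracket : 0 ≤ ψxx x0 t0 + ((m:ℝ)/x0 + (n:ℝ)/(1+x0)) * ψx x0 t0
        - ((m:ℝ)/x0^2 + (n:ℝ)/(1+x0)^2) * ψ x0 t0 - (n:ℝ)/(1+x0)^2 := by
      have heq : ψx x0 t0 = Gfun1 m n μ lam x0 := by linarith
      rw [heq]
      nlinarith [mul_pos hcpos (neg_pos.2 hval)]
    have hQ0 : 0 ≤ Q (ψ x0 t0) := hQnonneg _ (hmaps x0 hx0I t0 ht0I.1)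
    have hPDE0 := hPDE x0 hx0Ioo t0 ht0Ioi
    linarith [mul_nonneg hQ0 hbracket, hPDE0]
  -- conclude
  show ψtil x ≤ ψ x t
  refine le_of_forall_pos_le_add fun ε hε => ?_
  have ht1 : (0:ℝ) < t + 1 := by linarith
  have h1 := key (ε / (t + 1)) (by positivity)
  have h2 : ε / (t + 1) * t ≤ ε := by
    rw [div_mul_eq_mul_div, div_le_iff₀ ht1]
    nlinarith
  linarith
end

section
/- Let $b>1$, $p$, $s$ be reals with $s<bp$, and set $\tilde c_s=\dfrac{p^2-s^2-b^2+1}{2(bp-s)}$ and $\tilde A_s=s^2-2\tilde c_s s-1$. Then $\tilde A_s=p^2-2bp\,\tilde c_s-b^2$, and the following are equivalent: (1) $s\ge\tilde c_s$; (2) there exists a function $\psi:[1,b]\to\mathbb{R}$, continuous on $[1,b]$ and differentiable on $(1,b)$, satisfying $\psi(x)^2-2\tilde c_s x\,\psi(x)-x^2=\tilde A_s$ for all $x\in[1,b]$, with $\psi(1)=s$ and $\psi(b)=p$. Moreover, in that case the solution is unique, equal to $\tilde\psi_s(x)=\tilde c_s x+\sqrt{\tilde A_s+(1+\tilde c_s^2)x^2}$,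 and $x\mapsto x\,\tilde\psi_s(x)$ is strictly increasing on $[1,b]$. -/
set_option maxHeartbeats 800000 in
/-- Let `b > 1`, `p`, `s` be reals with `s < bp`, `c̃_s = (p² - s² - b² + 1)/(2(bp-s))`
and `Ã_s = s² - 2c̃_s s - 1`. Then `Ã_s = p² - 2bp c̃_s - b²`, and the following are
equivalent: (1) `s ≥ c̃_s`; (2) there is `ψ : [1,b] → ℝ`, continuous on `[1,b]` and
differentiable on `(1,b)`, with `ψ(x)² - 2c̃_s x ψ(x) - x² = Ã_s` on `[1,b]`,
`ψ(1) = s` and `ψ(b) = p`. Moreover in that case the solution is unique, equal to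
`ψ̃_s(x) = c̃_s x + √(Ã_s + (1+c̃_s²)x²)`, and `x ↦ x ψ̃_s(x)` is strictly increasing
on `[1,b]`. -/
theorem stmt_15 (b p s : ℝ) (hb : 1 < b) (hs : s < b * p) :
    let c : ℝ := (p ^ 2 - s ^ 2 - b ^ 2 + 1) / (2 * (b * p - s))
    let A : ℝ := s ^ 2 - 2 * c * s - 1
    A = p ^ 2 - 2 * b * p * c - b ^ 2 ∧
    (c ≤ s ↔ ∃ ψ : ℝ → ℝ, ContinuousOn ψ (Set.Icc 1 b) ∧
        DifferentiableOn ℝ ψ (Set.Ioo 1 b) ∧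
        (∀ x ∈ Set.Icc (1:ℝ) b, ψ x ^ 2 - 2 * c * x * ψ x - x ^ 2 = A) ∧
        ψ 1 = s ∧ ψ b = p) ∧
    (c ≤ s → ∀ ψ : ℝ → ℝ, ContinuousOn ψ (Set.Icc 1 b) →
        DifferentiableOn ℝ ψ (Set.Ioo 1 b) →
        (∀ x ∈ Set.Icc (1:ℝ) b, ψ x ^ 2 - 2 * c * x * ψ x - x ^ 2 = A) →
        ψ 1 = s → ψ b = p →
        ∀ x ∈ Set.Icc (1:ℝ) b, ψ x = c * x + Real.sqrt (A + (1 + c ^ 2) * x ^ 2)) ∧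
    (c ≤ s →
      StrictMonoOn (fun x => x * (c * x + Real.sqrt (A + (1 + c ^ 2) * x ^ 2)))
        (Set.Icc 1 b)) := by
  intro c A
  have hbp : 0 < b * p - s := by linarith
  have hcdef : c = (p ^ 2 - s ^ 2 - b ^ 2 + 1) / (2 * (b * p - s)) := rfl
  have hA : A = s ^ 2 - 2 * c * s - 1 := rfl
  clear_value A
  clear_value c
  have hc2 : 2 * (b * p - s) * c = p ^ 2 - s ^ 2 - b ^ 2 + 1 := by
    rw [hcdef]; field_simp
  have part1 : A = p ^ 2 - 2 * b * p * c - b ^ 2 := by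
    rw [hA]; linear_combination hc2
  have hpbc : 0 < p - b * c := by
    have h1 : 2 * (b * p - s) * (p - b * c)
        = b * p ^ 2 - 2 * s * p + b * s ^ 2 + b ^ 3 - b := by
      linear_combination (-b) * hc2
    have h2 : 0 < b * p ^ 2 - 2 * s * p + b * s ^ 2 + b ^ 3 - b := by
      nlinarith [sq_nonneg (p - s), sq_nonneg p, sq_nonneg s]
    nlinarith [h1, h2, hbp]
  have hQ1 : A + (1 + c ^ 2) * 1 ^ 2 = (s - c) ^ 2 := by rw [hA]; ring
  have hQb : A + (1 + c ^ 2) * b ^ 2 = (p - b * c) ^ 2 := by rw [part1]; ring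
  have hQnn : ∀ x : ℝ, 1 ≤ x → 0 ≤ A + (1 + c ^ 2) * x ^ 2 := by
    intro x hx
    nlinarith [sq_nonneg (s - c), hQ1, sq_nonneg c,
      mul_nonneg (sub_nonneg.mpr hx) (show (0:ℝ) ≤ x + 1 by linarith)]
  have hQpos : ∀ x : ℝ, 1 < x → 0 < A + (1 + c ^ 2) * x ^ 2 := by
    intro x hx
    nlinarith [sq_nonneg (s - c), hQ1, sq_nonneg c,
      mul_pos (sub_pos.mpr hx) (show (0:ℝ) < x + 1 by linarith)]
  -- derivative of the inner function on (1, b)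
  have hQder : ∀ x : ℝ, HasDerivAt (fun t => A + (1 + c ^ 2) * t ^ 2)
      (2 * (1 + c ^ 2) * x) x := by
    intro x
    have h := ((hasDerivAt_pow 2 x).const_mul (1 + c ^ 2)).const_add A
    convert h using 1
    · rfl
    · rfl
    · simp; ring
  have hsder : ∀ x ∈ Set.Ioo (1:ℝ) b,
      HasDerivAt (fun t => c * t + Real.sqrt (A + (1 + c ^ 2) * t ^ 2))
        (c + 2 * (1 + c ^ 2) * x / (2 * Real.sqrt (A + (1 + c ^ 2) * x ^ 2))) x := by
    intro x hx
    have h1 : HasDerivAt (fun t : ℝ => c * t) c x := by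
      simpa using (hasDerivAt_id x).const_mul c
    exact h1.add ((hQder x).sqrt (ne_of_gt (hQpos x hx.1)))
  have hcontInner : Continuous fun x : ℝ =>
      c * x + Real.sqrt (A + (1 + c ^ 2) * x ^ 2) := by
    exact (continuous_const.mul continuous_id).add
      (Real.continuous_sqrt.comp (by continuity))
  have uniq : ∀ ψ : ℝ → ℝ, ContinuousOn ψ (Set.Icc 1 b) →
      (∀ x ∈ Set.Icc (1:ℝ) b, ψ x ^ 2 - 2 * c * x * ψ x - x ^ 2 = A) →
      ψ b = p →
      ∀ x ∈ Set.Icc (1:ℝ) b, ψ x = c * x + Real.sqrt (A + (1 + c ^ 2) * x ^ 2) := by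
    intro ψ hψc hψe hψb x hx
    have hpos : ∀ y ∈ Set.Icc (1:ℝ) b, 0 ≤ ψ y - c * y := by
      by_contra h
      push_neg at h
      obtain ⟨y, hy, hylt⟩ := h
      have hgc : ContinuousOn (fun t => ψ t - c * t) (Set.Icc y b) :=
        (hψc.mono (Set.Icc_subset_Icc hy.1 le_rfl)).sub
          ((continuous_const.mul continuous_id).continuousOn)
      have hmem : (0:ℝ) ∈ Set.Icc (ψ y - c * y) (ψ b - c * b) := by
        constructor
        · linarith
        · rw [hψb]; linarith [hpbc]
      obtain ⟨x₀, hx₀mem, hx₀⟩ := intermediate_value_Icc hy.2 hgc hmem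
      have hx₀I : x₀ ∈ Set.Icc (1:ℝ) b := ⟨le_trans hy.1 hx₀mem.1, hx₀mem.2⟩
      have heq0 := hψe x₀ hx₀I
      have heqy := hψe y hy
      have hψx₀ : ψ x₀ = c * x₀ := by dsimp at hx₀; linarith
      rw [hψx₀] at heq0
      have hA₀ : A = -(1 + c ^ 2) * x₀ ^ 2 := by linear_combination -heq0
      have hy2 : (ψ y - c * y) ^ 2 = (1 + c ^ 2) * (y ^ 2 - x₀ ^ 2) := by
        linear_combination heqy + hA₀
      nlinarith [hy2,
        mul_pos (show 0 < c * y - ψ y by linarith) (show 0 < c * y - ψ y by linarith),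
        mul_nonneg (show (0:ℝ) ≤ 1 + c ^ 2 by positivity)
          (show (0:ℝ) ≤ x₀ ^ 2 - y ^ 2 by nlinarith [hx₀mem.1, hy.1])]
    have hsq : (ψ x - c * x) ^ 2 = A + (1 + c ^ 2) * x ^ 2 := by
      linear_combination hψe x hx
    have : Real.sqrt (A + (1 + c ^ 2) * x ^ 2) = ψ x - c * x := by
      rw [← hsq, Real.sqrt_sq (hpos x hx)]
    linarith [this]
  refine ⟨part1, ?_, ?_, ?_⟩
  · constructor
    · -- existence
      intro hcs
      refine ⟨fun x => c * x + Real.sqrt (A + (1 + c ^ 2) * x ^ 2),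
        hcontInner.continuousOn, ?_, ?_, ?_, ?_⟩
      · intro x hx
        exact ((hsder x hx).differentiableAt).differentiableWithinAt
      · intro x hx
        have h0 := hQnn x hx.1
        have h1 := Real.sq_sqrt h0
        linear_combination h1
      · show c * 1 + Real.sqrt (A + (1 + c ^ 2) * 1 ^ 2) = s
        rw [hQ1, Real.sqrt_sq (by linarith : (0:ℝ) ≤ s - c)]; ring
      · show c * b + Real.sqrt (A + (1 + c ^ 2) * b ^ 2) = p
        rw [hQb, Real.sqrt_sq hpbc.le]; ring
    · -- existence implies c ≤ s
      rintro ⟨ψ, hψc, _, hψe, hψ1, hψb⟩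
      by_contra hsc
      push_neg at hsc
      have := uniq ψ hψc hψe hψb 1 ⟨le_rfl, hb.le⟩
      rw [hψ1] at this
      rw [hQ1, Real.sqrt_sq_eq_abs, abs_of_nonpos (by linarith : s - c ≤ 0)] at this
      -- this : s = c * 1 + -(s - c), i.e. s = 2c - s, so s = c, contradicting s < c
      have : s = c := by linarith
      linarith
  · intro _ ψ hψc _ hψe _ hψb
    exact uniq ψ hψc hψe hψb
  · intro _
    apply strictMonoOn_of_deriv_pos (convex_Icc 1 b)
    · exact (continuous_id.mul hcontInner).continuousOn
    · intro x hx
      rw [interior_Icc] at hx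
      have hx0 : 0 < x := lt_trans one_pos hx.1
      have hQp := hQpos x hx.1
      set r := Real.sqrt (A + (1 + c ^ 2) * x ^ 2) with hr
      have hrpos : 0 < r := Real.sqrt_pos.mpr hQp
      have hr2 : r ^ 2 = A + (1 + c ^ 2) * x ^ 2 := Real.sq_sqrt hQp.le
      have hF : HasDerivAt (fun t => t * (c * t + Real.sqrt (A + (1 + c ^ 2) * t ^ 2)))
          (1 * (c * x + r) + x * (c + 2 * (1 + c ^ 2) * x / (2 * r))) x :=
        (hasDerivAt_id x).mul (hsder x hx)
      rw [hF.deriv]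
      have hd : (1 * (c * x + r) + x * (c + 2 * (1 + c ^ 2) * x / (2 * r))) * r
          = 2 * c * x * r + r ^ 2 + (1 + c ^ 2) * x ^ 2 := by
        field_simp
        ring
      have hT : 0 < r ^ 2 + (1 + c ^ 2) * x ^ 2 := by positivity
      have hkey : (r ^ 2 + (1 + c ^ 2) * x ^ 2 + 2 * c * x * r) *
          (r ^ 2 + (1 + c ^ 2) * x ^ 2 - 2 * c * x * r)
          = (r ^ 2 - (1 + c ^ 2) * x ^ 2) ^ 2 + 4 * x ^ 2 * r ^ 2 := by ring
      have hk2 : 0 < (r ^ 2 - (1 + c ^ 2) * x ^ 2) ^ 2 + 4 * x ^ 2 * r ^ 2 := by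
        nlinarith [sq_nonneg (r ^ 2 - (1 + c ^ 2) * x ^ 2),
          mul_pos (mul_pos hx0 hx0) (mul_pos hrpos hrpos)]
      have hdpos : 0 < 2 * c * x * r + r ^ 2 + (1 + c ^ 2) * x ^ 2 := by
        nlinarith [hkey, hk2, hT]
      have : 0 < (1 * (c * x + r) + x * (c + 2 * (1 + c ^ 2) * x / (2 * r))) * r := by
        rw [hd]; linarith
      nlinarith [this, hrpos]
end

section
/- Let $b>1$ and $p$ be reals, set $\xi=bp-\sqrt{(p^2+1)(b^2-1)}$, and for $s<bp$ set $\tilde c_s=\dfrac{p^2-s^2-b^2+1}{2(bp-s)}$, $\tilde A_s=s^2-2\tilde c_s s-1$ and $\tilde\psi_s(x)=\tilde c_s x+\sqrt{\tilde A_s+(1+\tilde c_s^2)x^2}$ for $x\in[1,b]$. Then for all $\xi\le s_1<s_2<bp$ and all $x\in[1,b]$ one has $\tilde\psi_{s_1}(x)\le\tilde\psi_{s_2}(x)$, with equality if and only if $x=b$; in particular $\tilde\psi_{s_1}(b)=\tilde\psi_{s_2}(b)=p$. -/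
noncomputable def cc (b p s : ℝ) : ℝ := (p ^ 2 - s ^ 2 - b ^ 2 + 1) / (2 * (b * p - s))

noncomputable def psi (b p s x : ℝ) : ℝ :=
  cc b p s * x + Real.sqrt ((s ^ 2 - 2 * cc b p s * s - 1) + (1 + cc b p s ^ 2) * x ^ 2)

lemma cc_eq (b p s : ℝ) (hs : s < b * p) :
    2 * cc b p s * (b * p - s) = p ^ 2 - s ^ 2 - b ^ 2 + 1 := by
  have hd : b * p - s ≠ 0 := by intro h; rw [sub_eq_zero] at h; exact absurd h.symm (ne_of_lt hs)
  unfold cc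
  rw [show ∀ X : ℝ, 2 * (X / (2 * (b * p - s))) * (b * p - s) = X / (2 * (b * p - s)) * (2 * (b * p - s)) from fun X => by ring, div_mul_cancel₀ _ (mul_ne_zero two_ne_zero hd)]

lemma A_eq (b p s : ℝ) (hs : s < b * p) :
    s ^ 2 - 2 * cc b p s * s - 1 = p ^ 2 - b ^ 2 - 2 * cc b p s * (b * p) := by
  linear_combination cc_eq b p s hs

lemma pcb_pos (b p s : ℝ) (hb : 1 < b) (hs : s < b * p) : cc b p s * b < p := by
  have hd : 0 < b * p - s := by linarith
  have h := cc_eq b p s hs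
  nlinarith [sq_nonneg (p - s), mul_nonneg (sub_nonneg.2 hb.le) (add_nonneg (sq_nonneg p) (sq_nonneg s)), mul_pos hd hd]

lemma bpc_pos (b p s : ℝ) (hb : 1 < b) (hs : s < b * p) : cc b p s < b * p := by
  have hd : 0 < b * p - s := by linarith
  have h := cc_eq b p s hs
  nlinarith [sq_nonneg (b * p - s), mul_pos (show (0:ℝ) < b ^ 2 - 1 by nlinarith) (show (0:ℝ) < p ^ 2 + 1 by positivity)]

lemma R_nonneg (s x c : ℝ) (hx1 : 1 ≤ x) :
    0 ≤ (s ^ 2 - 2 * c * s - 1) + (1 + c ^ 2) * x ^ 2 := by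
  nlinarith [sq_nonneg (s - c), mul_nonneg (by positivity : (0:ℝ) ≤ 1 + c ^ 2) (show (0:ℝ) ≤ x ^ 2 - 1 by nlinarith)]

lemma psi_b (b p s : ℝ) (hb : 1 < b) (hs : s < b * p) : psi b p s b = p := by
  have h : (s ^ 2 - 2 * cc b p s * s - 1) + (1 + cc b p s ^ 2) * b ^ 2 = (p - cc b p s * b) ^ 2 := by
    linear_combination cc_eq b p s hs
  have hpc := pcb_pos b p s hb hs
  unfold psi
  rw [h, Real.sqrt_sq (by linarith)]
  ring

lemma cc_lt (b p s₁ s₂ : ℝ) (hb : 1 < b)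
    (hξ : b * p - Real.sqrt ((p ^ 2 + 1) * (b ^ 2 - 1)) ≤ s₁) (h12 : s₁ < s₂) (hs₂ : s₂ < b * p) :
    cc b p s₂ < cc b p s₁ := by
  have hd₂ : 0 < b * p - s₂ := by linarith
  have hd₁ : 0 < b * p - s₁ := by linarith
  have hM : (0:ℝ) ≤ (p ^ 2 + 1) * (b ^ 2 - 1) := mul_nonneg (by positivity) (by nlinarith)
  have hsq : (b * p - s₁) ^ 2 ≤ (p ^ 2 + 1) * (b ^ 2 - 1) := by
    have h1 : b * p - s₁ ≤ Real.sqrt ((p ^ 2 + 1) * (b ^ 2 - 1)) := by linarith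
    calc (b * p - s₁) ^ 2 ≤ Real.sqrt ((p ^ 2 + 1) * (b ^ 2 - 1)) ^ 2 := by
          apply pow_le_pow_left₀ hd₁.le h1
      _ = (p ^ 2 + 1) * (b ^ 2 - 1) := Real.sq_sqrt hM
  have hE : (b * p - s₁) * (b * p - s₂) < (p ^ 2 + 1) * (b ^ 2 - 1) := by
    nlinarith [mul_pos hd₁ (show (0:ℝ) < s₂ - s₁ by linarith)]
  unfold cc
  rw [div_lt_div_iff₀ (by linarith) (by linarith)]
  nlinarith [mul_pos (show (0:ℝ) < s₂ - s₁ by linarith) (sub_pos.2 hE)]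

set_option maxHeartbeats 1000000 in
lemma psi_lt (b p s₁ s₂ x : ℝ) (hb : 1 < b)
    (hξ : b * p - Real.sqrt ((p ^ 2 + 1) * (b ^ 2 - 1)) ≤ s₁) (h12 : s₁ < s₂) (hs₂ : s₂ < b * p)
    (hx1 : 1 ≤ x) (hxb : x < b) : psi b p s₁ x < psi b p s₂ x := by
  have hs₁ : s₁ < b * p := lt_trans h12 hs₂
  set c₁ := cc b p s₁ with hc₁
  set c₂ := cc b p s₂ with hc₂
  have hA1 := A_eq b p s₁ hs₁
  have hA2 := A_eq b p s₂ hs₂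
  have hc12 : c₂ < c₁ := cc_lt b p s₁ s₂ hb hξ h12 hs₂
  set R₁ := (s₁ ^ 2 - 2 * c₁ * s₁ - 1) + (1 + c₁ ^ 2) * x ^ 2 with hR₁def
  set R₂ := (s₂ ^ 2 - 2 * c₂ * s₂ - 1) + (1 + c₂ ^ 2) * x ^ 2 with hR₂def
  have hR₁ : 0 ≤ R₁ := R_nonneg s₁ x c₁ hx1
  have hR₂ : 0 ≤ R₂ := R_nonneg s₂ x c₂ hx1
  have hx0 : (0:ℝ) < x := by linarith
  have hsq1 : Real.sqrt R₁ ^ 2 = R₁ := Real.sq_sqrt hR₁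
  have hsq2 : Real.sqrt R₂ ^ 2 = R₂ := Real.sq_sqrt hR₂
  -- bp - c₁ x² > 0
  have hbc1 : c₁ < b * p := bpc_pos b p s₁ hb hs₁
  have hbcb1 : c₁ * b < p := pcb_pos b p s₁ hb hs₁
  have hbpc2 : 0 < b * p - c₁ * x ^ 2 := by
    rcases le_or_gt c₁ 0 with hc | hc
    · nlinarith [mul_nonneg (neg_nonneg.2 hc) (show (0:ℝ) ≤ x ^ 2 - 1 by nlinarith)]
    · nlinarith [mul_nonneg hc.le (show (0:ℝ) ≤ b ^ 2 - x ^ 2 by nlinarith)]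
  -- x * psi₁ < b p
  have hkey : x ^ 2 * R₁ + (b ^ 2 - x ^ 2) * (p ^ 2 + x ^ 2) = (b * p - c₁ * x ^ 2) ^ 2 := by
    rw [hR₁def]; linear_combination x ^ 2 * hA1
  have hBX : 0 < (b ^ 2 - x ^ 2) * (p ^ 2 + x ^ 2) :=
    mul_pos (by nlinarith) (by positivity)
  have hlt1 : x ^ 2 * R₁ < (b * p - c₁ * x ^ 2) ^ 2 := by linarith
  have hxs : (x * Real.sqrt R₁) ^ 2 = x ^ 2 * R₁ := by
    rw [mul_pow, hsq1]
  have hstep : x * Real.sqrt R₁ < b * p - c₁ * x ^ 2 := by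
    nlinarith [mul_nonneg hx0.le (Real.sqrt_nonneg R₁), hxs, hlt1, hbpc2]
  have hpsi1 : psi b p s₁ x = c₁ * x + Real.sqrt R₁ := rfl
  have hstep1 : x * psi b p s₁ x < b * p := by
    rw [hpsi1]; nlinarith [hstep]
  -- (psi₁ - c₂ x)² < R₂
  have hA12 : (s₂ ^ 2 - 2 * c₂ * s₂ - 1) = (s₁ ^ 2 - 2 * c₁ * s₁ - 1) + 2 * (c₁ - c₂) * (b * p) := by
    linear_combination hA2 - hA1
  have hm : 0 < (c₁ - c₂) * (b * p - x * psi b p s₁ x) :=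
    mul_pos (by linarith) (by linarith)
  have hψ₁sq : (psi b p s₁ x - c₁ * x) ^ 2 = R₁ := by
    rw [hpsi1, show c₁ * x + Real.sqrt R₁ - c₁ * x = Real.sqrt R₁ from by ring, hsq1]
  have h2 : (psi b p s₁ x - c₂ * x) ^ 2 < R₂ := by
    rw [hR₂def]
    nlinarith [hψ₁sq, hm, hA12, hR₁def]
  have hpsi2 : psi b p s₂ x = c₂ * x + Real.sqrt R₂ := rfl
  rw [hpsi2]
  nlinarith [h2, hsq2, Real.sqrt_nonneg R₂]

/-- Let `b > 1` and `p` be reals, `ξ = bp - √((p²+1)(b²-1))`, and for `s < bp` set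
`c̃_s = (p² - s² - b² + 1)/(2(bp-s))`, `Ã_s = s² - 2c̃_s s - 1` and
`ψ̃_s(x) = c̃_s x + √(Ã_s + (1+c̃_s²)x²)` for `x ∈ [1,b]`. Then for all
`ξ ≤ s₁ < s₂ < bp` and all `x ∈ [1,b]` one has `ψ̃_{s₁}(x) ≤ ψ̃_{s₂}(x)`, with
equality if and only if `x = b`; in particular `ψ̃_{s₁}(b) = ψ̃_{s₂}(b) = p`. -/
theorem stmt_16 (b p : ℝ) (hb : 1 < b) :
    let ξ : ℝ := b * p - Real.sqrt ((p ^ 2 + 1) * (b ^ 2 - 1))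
    let c : ℝ → ℝ := fun s => (p ^ 2 - s ^ 2 - b ^ 2 + 1) / (2 * (b * p - s))
    let A : ℝ → ℝ := fun s => s ^ 2 - 2 * c s * s - 1
    let ψ : ℝ → ℝ → ℝ := fun s x => c s * x + Real.sqrt (A s + (1 + c s ^ 2) * x ^ 2)
    ∀ s₁ s₂ : ℝ, ξ ≤ s₁ → s₁ < s₂ → s₂ < b * p →
      (∀ x ∈ Set.Icc (1:ℝ) b, ψ s₁ x ≤ ψ s₂ x ∧ (ψ s₁ x = ψ s₂ x ↔ x = b)) ∧
      ψ s₁ b = p ∧ ψ s₂ b = p := by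
  intro ξ c A ψ s₁ s₂ hξ h12 hs₂
  have hs₁ : s₁ < b * p := lt_trans h12 hs₂
  have he1 : ∀ s x : ℝ, ψ s x = psi b p s x := fun s x => rfl
  refine ⟨?_, ?_, ?_⟩
  · intro x hx
    obtain ⟨hx1, hxb⟩ := hx
    rcases eq_or_lt_of_le hxb with h | h
    · have e1 : ψ s₁ x = p := by rw [he1, h]; exact psi_b b p s₁ hb hs₁
      have e2 : ψ s₂ x = p := by rw [he1, h]; exact psi_b b p s₂ hb hs₂
      exact ⟨by rw [e1, e2], ⟨fun _ => h, fun _ => by rw [e1, e2]⟩⟩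
    · have hlt := psi_lt b p s₁ s₂ x hb hξ h12 hs₂ hx1 h
      rw [he1, he1]
      exact ⟨hlt.le, ⟨fun heq => absurd heq (ne_of_lt hlt), fun heq => absurd heq (ne_of_lt h)⟩⟩
  · rw [he1]; exact psi_b b p s₁ hb hs₁
  · rw [he1]; exact psi_b b p s₂ hb hs₂
end

section
/- Let $b>1$, $p$, $q$ be reals with $q<bp$ and $q\le c_0$, where $c_0=\dfrac{p^2-q^2-b^2+1}{2(bp-q)}$; set $\xi=bp-\sqrt{(p^2+1)(b^2-1)}$ and $\tilde\psi_\xi(x)=\xi x+\sqrt{(1+\xi^2)(x^2-1)}$. Let $Q:[1,b]\to[0,\infty)$ be continuous, and let $\psi:[1,b]\times[0,\infty)\to\mathbb{R}$ be continuous, with $\partial_t\psi$, $\partial_x\psi$, $\partial_x^2\psi$ continuous on $(1,b)\times(0,\infty)$, satisfying there the cotangent-flow equation $\partial_t\psi = \dfrac{Q(x)}{(x\,\partial_x\psi+\psi)^2}\Big((x^2+\psi^2)\,\partial_x^2\psi+\big(1+(\partial_x\psi)^2\big)(x\,\partial_x\psi-\psi)\Big)$, with boundary data $\psi(1,t)=q$,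 $\psi(b,t)=p$ for all $t$, initial data $\psi(x,0)=\dfrac{b(bq-p)}{(b^2-1)x}+\dfrac{(bp-q)x}{b^2-1}$, and such that for every $T>0$ there is $\delta>0$ with $x\,\partial_x\psi(x,t)+\psi(x,t)\ge\delta$ on $(1,b)\times(0,T]$. Then $\psi(x,t)\le\tilde\psi_\xi(x)$ for all $(x,t)\in[1,b]\times[0,\infty)$. -/
open Set Filter Topology

lemma aux_time {h : ℝ → ℝ} {d t0 : ℝ} (hd : HasDerivAt h d t0) (ht0 : 0 < t0)
    (hle : ∀ t, 0 ≤ t → t < t0 → h t ≤ h t0) : 0 ≤ d := by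
  by_contra hneg
  push_neg at hneg
  have hs := hasDerivAt_iff_tendsto_slope.mp hd
  have h1 : ∀ᶠ t in 𝓝[≠] t0, slope h t0 t < 0 := hs.eventually_lt_const hneg
  have hmono : 𝓝[<] t0 ≤ 𝓝[≠] t0 :=
    nhdsWithin_mono _ (fun y hy => ne_of_lt hy)
  have h2 : ∀ᶠ t in 𝓝[<] t0, slope h t0 t < 0 := h1.filter_mono hmono
  have h3 : ∀ᶠ t in 𝓝[<] t0, 0 < t :=
    eventually_nhdsWithin_of_eventually_nhds (eventually_gt_nhds ht0)
  have h4 : ∀ᶠ t in 𝓝[<] t0, t < t0 := eventually_mem_nhdsWithin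
  obtain ⟨t, hst, htpos, htlt⟩ := (h2.and (h3.and h4)).exists
  have hslope : (h t - h t0) / (t - t0) < 0 := by
    simpa [slope_def_field] using hst
  have hnum : 0 < h t - h t0 := by
    rcases div_neg_iff.mp hslope with ⟨h5, h6⟩ | ⟨h5, h6⟩
    · linarith
    · linarith
  have := hle t htpos.le htlt
  linarith

lemma aux_max {g g1 : ℝ → ℝ} {a c x0 g2 : ℝ} (hx : x0 ∈ Set.Ioo a c)
    (hg : ∀ x ∈ Set.Ioo a c, HasDerivAt g (g1 x) x)
    (hmax : ∀ x ∈ Set.Ioo a c, g x ≤ g x0)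
    (hg2 : HasDerivAt g1 g2 x0) : g1 x0 = 0 ∧ g2 ≤ 0 := by
  have hloc : IsLocalMax g x0 :=
    Filter.eventually_of_mem (isOpen_Ioo.mem_nhds hx) hmax
  have h10 : g1 x0 = 0 := hloc.hasDerivAt_eq_zero (hg x0 hx)
  refine ⟨h10, ?_⟩
  by_contra hpos
  push_neg at hpos
  have hs := hasDerivAt_iff_tendsto_slope.mp hg2
  have h1 : ∀ᶠ t in 𝓝[>] x0, 0 < slope g1 x0 t :=
    (hs.eventually_const_lt hpos).filter_mono
      (nhdsWithin_mono _ (fun y hy => ne_of_gt hy))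
  have h2 : ∀ᶠ t in 𝓝[>] x0, t ∈ Set.Ioo a c :=
    eventually_nhdsWithin_of_eventually_nhds (isOpen_Ioo.eventually_mem hx)
  obtain ⟨u, hu, hsub⟩ := mem_nhdsGT_iff_exists_Ioo_subset.mp (h1.and h2)
  have hux : x0 < u := hu
  set v := (x0 + min u c) / 2 with hv
  have hminuc : x0 < min u c := lt_min hux hx.2
  have hxv : x0 < v := by simp only [hv]; linarith
  have hvu : v < u := by
    have : v < min u c := by simp only [hv]; linarith
    exact lt_of_lt_of_le this (min_le_left _ _)
  have hvc : v < c := by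
    have : v < min u c := by simp only [hv]; linarith
    exact lt_of_lt_of_le this (min_le_right _ _)
  have hIccsub : Set.Icc x0 v ⊆ Set.Ioo a c := fun y hy =>
    ⟨lt_of_lt_of_le hx.1 hy.1, lt_of_le_of_lt hy.2 hvc⟩
  have hg1pos : ∀ y ∈ Set.Ioo x0 v, 0 < g1 y := by
    intro y hy
    have hy' : y ∈ Set.Ioo x0 u := ⟨hy.1, lt_trans hy.2 hvu⟩
    have := (hsub hy').1
    have hslope : 0 < (g1 y - g1 x0) / (y - x0) := by
      simpa [slope_def_field] using this
    rw [h10, sub_zero] at hslope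
    have hden : 0 < y - x0 := by linarith [hy.1]
    by_contra hne
    push_neg at hne
    have : g1 y / (y - x0) ≤ 0 := div_nonpos_of_nonpos_of_nonneg hne hden.le
    linarith
  have hmono : StrictMonoOn g (Set.Icc x0 v) := by
    apply strictMonoOn_of_deriv_pos (convex_Icc x0 v)
    · exact fun y hy => ((hg y (hIccsub hy)).continuousAt).continuousWithinAt
    · intro y hy
      rw [interior_Icc] at hy
      rw [(hg y (hIccsub (Set.Ioo_subset_Icc_self hy))).deriv]
      exact hg1pos y hy
  have h5 : g x0 < g v :=
    hmono (Set.left_mem_Icc.mpr hxv.le) (Set.right_mem_Icc.mpr hxv.le) hxv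
  have h6 : g v ≤ g x0 := hmax v (hIccsub (Set.right_mem_Icc.mpr hxv.le))
  linarith

-- stationarity of the barrier: pure field identity
lemma stat_id (ξ x r : ℝ) (hr : r ≠ 0) :
    (x^2 + (ξ*x + r)^2) * (((1+ξ^2)*r - (1+ξ^2)*x*((1+ξ^2)*x/r))/r^2)
      + (1 + (ξ + (1+ξ^2)*x/r)^2) * (x*(ξ + (1+ξ^2)*x/r) - (ξ*x + r)) = 0 := by
  field_simp
  ring

lemma alg_qxi (b p q s : ℝ) (hb : 1 < b) (hq : q < b * p)
    (hqc : q ≤ (p ^ 2 - q ^ 2 - b ^ 2 + 1) / (2 * (b * p - q)))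
    (hsnn : 0 ≤ s) (hs2 : s^2 = (p^2+1)*(b^2-1)) : q ≤ b*p - s := by
  have hbpq : 0 < b*p - q := by linarith
  have h1 : q * (2*(b*p-q)) ≤ p ^ 2 - q ^ 2 - b ^ 2 + 1 :=
    (le_div_iff₀ (by positivity)).mp hqc
  have h2 : (p^2+1)*(b^2-1) ≤ (b*p-q)^2 := by nlinarith
  have h3 : s ≤ b*p - q := by
    have := Real.sqrt_le_sqrt (hs2 ▸ h2 : s^2 ≤ (b*p-q)^2)
    rwa [Real.sqrt_sq hsnn, Real.sqrt_sq hbpq.le] at this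
  linarith

lemma alg_pxib (b p s : ℝ) (hb : 1 < b) (hspos : 0 < s)
    (hs2 : s^2 = (p^2+1)*(b^2-1)) : 0 ≤ p - (b*p-s)*b := by
  have hb2 : (0:ℝ) < b^2 - 1 := by nlinarith
  have hb0 : (0:ℝ) < b := by linarith
  have key : (b*s - p*(b^2-1))*(b*s + p*(b^2-1)) = (b^2-1)*(p^2 + b^2) := by
    linear_combination (b^2)*hs2
  have hbs : 0 < b*s := mul_pos hb0 hspos
  have hgoal : 0 ≤ b*s - p*(b^2-1) := by
    nlinarith [mul_pos hb2 (by positivity : (0:ℝ) < p^2 + b^2)]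
  nlinarith

lemma alg_sqb (b p s : ℝ) (hb : 1 < b) (hspos : 0 < s)
    (hs2 : s^2 = (p^2+1)*(b^2-1)) :
    Real.sqrt ((1+(b*p-s)^2)*(b^2-1)) = p - (b*p-s)*b := by
  have h1 : (1+(b*p-s)^2)*(b^2-1) = (p - (b*p-s)*b)^2 := by
    linear_combination (-1 : ℝ) * hs2
  rw [h1, Real.sqrt_sq (alg_pxib b p s hb hspos hs2)]

set_option maxHeartbeats 1000000 in
lemma init_aux (ξ A B : ℝ) {b y : ℝ} (hb : 1 < b) (hy1 : 1 ≤ y) (hyb : y ≤ b)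
    (hub : (A/b + B*b - ξ*b)^2 - (1+ξ^2)*(b^2-1) = 0)
    (hq1 : A + B ≤ ξ)
    (hFy : 0 < A/y + B*y - ξ*y)
    (huy : (1+ξ^2)*(y^2-1) < (A/y + B*y - ξ*y)^2) : False := by
  set K : ℝ := B^2 - 2*ξ*B - 1 with hK_def
  have hb0 : (0:ℝ) < b := by linarith
  have hy0 : (0:ℝ) < y := by linarith
  have hIdent : ∀ z : ℝ, z ≠ 0 →
      ((A/z + B*z - ξ*z)^2 - (1+ξ^2)*(z^2-1)) * (z^2*b^2) =
        (b^2-z^2)*(A^2 - K*b^2*z^2)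
        + z^2*((A/b + B*b - ξ*b)^2 - (1+ξ^2)*(b^2-1))*b^2 := by
    intro z hz
    rw [hK_def]
    field_simp
    ring
  have hIdent' : ∀ z : ℝ, z ≠ 0 →
      ((A/z + B*z - ξ*z)^2 - (1+ξ^2)*(z^2-1)) * (z^2*b^2) =
        (b^2-z^2)*(A^2 - K*b^2*z^2) := by
    intro z hz
    rw [hIdent z hz, hub]
    ring
  have huy' : 0 < (A/y + B*y - ξ*y)^2 - (1+ξ^2)*(y^2-1) := by linarith
  have hyb' : y < b := by
    rcases lt_or_eq_of_le hyb with h | h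
    · exact h
    · exfalso; rw [h] at huy'; linarith
  have hKy : 0 < A^2 - K*b^2*y^2 := by
    have h1 := hIdent' y (ne_of_gt hy0)
    have h2 : 0 < ((A/y + B*y - ξ*y)^2 - (1+ξ^2)*(y^2-1)) * (y^2*b^2) :=
      mul_pos huy' (by positivity)
    rw [h1] at h2
    have h3 : 0 < b^2 - y^2 := by nlinarith
    by_contra hc
    push_neg at hc
    nlinarith
  -- intermediate value theorem
  have hGcont : ContinuousOn
      (fun z : ℝ => A/z + B*z - ξ*z + Real.sqrt ((1+ξ^2)*(z^2-1)))
      (Set.Icc 1 y) := by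
    apply ContinuousOn.add
    · apply ContinuousOn.sub
      · apply ContinuousOn.add
        · exact continuousOn_const.div continuousOn_id
            (fun z hz => by have := hz.1; intro h; rw [h] at this; linarith)
        · exact (continuous_const.mul continuous_id).continuousOn
      · exact (continuous_const.mul continuous_id).continuousOn
    · exact Real.continuous_sqrt.comp_continuousOn (by fun_prop)
  have hG1 : A/1 + B*1 - ξ*1 + Real.sqrt ((1+ξ^2)*((1:ℝ)^2-1)) ≤ 0 := by
    have h0 : (1+ξ^2)*((1:ℝ)^2-1) = 0 := by ring
    rw [h0, Real.sqrt_zero]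
    simp only [div_one, mul_one]
    linarith
  have hGy : (0:ℝ) ≤ A/y + B*y - ξ*y + Real.sqrt ((1+ξ^2)*(y^2-1)) := by
    have := Real.sqrt_nonneg ((1+ξ^2)*(y^2-1))
    linarith
  obtain ⟨z, hzmem, hGz⟩ := intermediate_value_Icc hy1 hGcont ⟨hG1, hGy⟩
  have hz1 : 1 ≤ z := hzmem.1
  have hzy : z ≤ y := hzmem.2
  have hz0 : (0:ℝ) < z := by linarith
  have hGz' : A/z + B*z - ξ*z + Real.sqrt ((1+ξ^2)*(z^2-1)) = 0 := hGz
  have hzz : A/z + B*z - ξ*z = - Real.sqrt ((1+ξ^2)*(z^2-1)) := by linarith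
  have hznn : (0:ℝ) ≤ (1+ξ^2)*(z^2-1) :=
    mul_nonneg (by positivity) (by nlinarith)
  have huz : (A/z + B*z - ξ*z)^2 - (1+ξ^2)*(z^2-1) = 0 := by
    rw [hzz, neg_sq, Real.sq_sqrt hznn]; ring
  -- but positivity propagation says u z > 0
  have hKz : 0 < A^2 - K*b^2*z^2 := by
    rcases le_or_gt K 0 with hK | hK
    · have h1 : (0:ℝ) ≤ (-K)*b^2 := mul_nonneg (neg_nonneg.mpr hK) (sq_nonneg b)
      nlinarith [hKy, mul_nonneg (sq_nonneg A) (by nlinarith : (0:ℝ) ≤ y^2-1),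
        mul_nonneg (mul_nonneg h1 (by nlinarith : (0:ℝ) ≤ z^2-1))
          (by positivity : (0:ℝ) ≤ y^2),
        (by positivity : (0:ℝ) < y^2)]
    · have h2 : 0 ≤ K*b^2*(y^2 - z^2) :=
        mul_nonneg (mul_nonneg hK.le (sq_nonneg b)) (by nlinarith)
      nlinarith [hKy, h2]
  have h4 := hIdent' z (ne_of_gt hz0)
  rw [huz] at h4
  have h5 : 0 < b^2 - z^2 := by nlinarith
  nlinarith

set_option maxHeartbeats 1000000 in
lemma initial_comparison (b p q s : ℝ) (hb : 1 < b) (hsnn : 0 ≤ s)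
    (hs2 : s^2 = (p^2+1)*(b^2-1)) (hqs : q ≤ b*p - s) :
    ∀ y ∈ Set.Icc (1:ℝ) b,
      b*(b*q-p)/((b^2-1)*y) + (b*p-q)*y/(b^2-1) ≤
        (b*p-s)*y + Real.sqrt ((1+(b*p-s)^2)*(y^2-1)) := by
  have hb2 : (0:ℝ) < b^2 - 1 := by nlinarith
  have hb0 : (0:ℝ) < b := by linarith
  intro y hy
  have hy1 : 1 ≤ y := hy.1
  have hyb : y ≤ b := hy.2
  have hy0 : (0:ℝ) < y := by linarith
  set ξ : ℝ := b*p - s with hξ_def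
  set A : ℝ := b*(b*q-p)/(b^2-1) with hA_def
  set B : ℝ := (b*p-q)/(b^2-1) with hB_def
  have hrw : b*(b*q-p)/((b^2-1)*y) + (b*p-q)*y/(b^2-1) = A/y + B*y := by
    rw [hA_def, hB_def]; field_simp; try ring
  rw [hrw]
  by_contra hcon
  push_neg at hcon
  have hF : 0 < A/y + B*y - ξ*y := by
    have := Real.sqrt_nonneg ((1+ξ^2)*(y^2-1))
    linarith
  have hsq : Real.sqrt ((1+ξ^2)*(y^2-1)) < A/y + B*y - ξ*y := by linarith
  have huy : (1+ξ^2)*(y^2-1) < (A/y + B*y - ξ*y)^2 := (Real.sqrt_lt' hF).mp hsq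
  have hpb : A/b + B*b = p := by
    rw [hA_def, hB_def]; field_simp; try ring
  have hub : (A/b + B*b - ξ*b)^2 - (1+ξ^2)*(b^2-1) = 0 := by
    rw [hpb, hξ_def]
    linear_combination hs2
  have hq1 : A + B ≤ ξ := by
    have : A + B = q := by rw [hA_def, hB_def]; field_simp; ring
    rw [this]; exact hqs
  exact init_aux ξ A B hb hy1 hyb hub hq1 hF huy

set_option maxHeartbeats 1000000 in
/-- Comparison along the cotangent flow for the dHYM equation on `Bl_{x₀}ℙ²` under the
Calabi ansatz: let `b > 1`, `q < bp` and `q ≤ c₀ = (p² - q² - b² + 1)/(2(bp-q))`, set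
`ξ = bp - √((p²+1)(b²-1))` and `ψ̃_ξ(x) = ξx + √((1+ξ²)(x²-1))`. If
`ψ : [1,b] × [0,∞) → ℝ` solves the reduced cotangent flow
`∂_tψ = (Q(x)/(x∂_xψ + ψ)²)((x² + ψ²)∂_x²ψ + (1 + (∂_xψ)²)(x∂_xψ - ψ))`, with
`Q ≥ 0` continuous on `[1,b]`, boundary data `ψ(1,t) = q`, `ψ(b,t) = p`, initial data
`ψ(x,0) = b(bq-p)/((b²-1)x) + (bp-q)x/(b²-1)`, and the admissibility bound
`x∂_xψ + ψ ≥ δ > 0` on `(1,b) × (0,T]` for each `T > 0`, then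
`ψ(x,t) ≤ ψ̃_ξ(x)` on `[1,b] × [0,∞)`. -/
theorem stmt_19 (b p q : ℝ) (hb : 1 < b) (hq : q < b * p)
    (hqc : q ≤ (p ^ 2 - q ^ 2 - b ^ 2 + 1) / (2 * (b * p - q)))
    (Q : ℝ → ℝ) (hQcont : ContinuousOn Q (Set.Icc 1 b))
    (hQnonneg : ∀ x ∈ Set.Icc (1:ℝ) b, 0 ≤ Q x)
    (ψ ψt ψx ψxx : ℝ → ℝ → ℝ)
    (hcont : ContinuousOn (fun pt : ℝ × ℝ => ψ pt.1 pt.2) (Set.Icc 1 b ×ˢ Set.Ici 0))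
    (hψtd : ∀ x ∈ Set.Ioo (1:ℝ) b, ∀ t ∈ Set.Ioi (0:ℝ),
      HasDerivAt (fun τ => ψ x τ) (ψt x t) t)
    (hψxd : ∀ x ∈ Set.Ioo (1:ℝ) b, ∀ t ∈ Set.Ioi (0:ℝ),
      HasDerivAt (fun y => ψ y t) (ψx x t) x)
    (hψxxd : ∀ x ∈ Set.Ioo (1:ℝ) b, ∀ t ∈ Set.Ioi (0:ℝ),
      HasDerivAt (fun y => ψx y t) (ψxx x t) x)
    (hψtc : ContinuousOn (fun pt : ℝ × ℝ => ψt pt.1 pt.2) (Set.Ioo 1 b ×ˢ Set.Ioi 0))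
    (hψxc : ContinuousOn (fun pt : ℝ × ℝ => ψx pt.1 pt.2) (Set.Ioo 1 b ×ˢ Set.Ioi 0))
    (hψxxc : ContinuousOn (fun pt : ℝ × ℝ => ψxx pt.1 pt.2) (Set.Ioo 1 b ×ˢ Set.Ioi 0))
    (hPDE : ∀ x ∈ Set.Ioo (1:ℝ) b, ∀ t ∈ Set.Ioi (0:ℝ),
      ψt x t = Q x / (x * ψx x t + ψ x t) ^ 2 *
        ((x ^ 2 + ψ x t ^ 2) * ψxx x t + (1 + ψx x t ^ 2) * (x * ψx x t - ψ x t)))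
    (hbd1 : ∀ t ∈ Set.Ici (0:ℝ), ψ 1 t = q)
    (hbdb : ∀ t ∈ Set.Ici (0:ℝ), ψ b t = p)
    (hinit : ∀ x ∈ Set.Icc (1:ℝ) b,
      ψ x 0 = b * (b * q - p) / ((b ^ 2 - 1) * x) + (b * p - q) * x / (b ^ 2 - 1))
    (hadm : ∀ T > (0:ℝ), ∃ δ > (0:ℝ), ∀ x ∈ Set.Ioo (1:ℝ) b, ∀ t ∈ Set.Ioc (0:ℝ) T,
      δ ≤ x * ψx x t + ψ x t) :
    ∀ x ∈ Set.Icc (1:ℝ) b, ∀ t ∈ Set.Ici (0:ℝ),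
      ψ x t ≤ (b * p - Real.sqrt ((p ^ 2 + 1) * (b ^ 2 - 1))) * x +
        Real.sqrt ((1 + (b * p - Real.sqrt ((p ^ 2 + 1) * (b ^ 2 - 1))) ^ 2) *
          (x ^ 2 - 1)) := by
  have hb0 : (0:ℝ) < b := lt_trans one_pos hb
  have hb2 : (0:ℝ) < b^2 - 1 := by nlinarith
  set s : ℝ := Real.sqrt ((p ^ 2 + 1) * (b ^ 2 - 1)) with hs_def
  have hsnn : 0 ≤ s := Real.sqrt_nonneg _
  have hspos : 0 < s := Real.sqrt_pos.mpr (by positivity)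
  have hs2 : s^2 = (p^2+1)*(b^2-1) := Real.sq_sqrt (by positivity)
  set ξ : ℝ := b*p - s with hξ_def
  have hqξ : q ≤ ξ := alg_qxi b p q s hb hq hqc hsnn hs2
  have hsqb : Real.sqrt ((1+ξ^2)*(b^2-1)) = p - ξ*b := alg_sqb b p s hb hspos hs2
  have hc2pos : (0:ℝ) < 1 + ξ^2 := by positivity
  have hinitle : ∀ y ∈ Set.Icc (1:ℝ) b,
      ψ y 0 ≤ ξ*y + Real.sqrt ((1+ξ^2)*(y^2-1)) := by
    intro y hy
    rw [hinit y hy]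
    exact initial_comparison b p q s hb hsnn hs2 hqξ y hy
  have hargpos : ∀ (η x' t' : ℝ), 0 < η → 1 ≤ x' → 0 ≤ t' →
      0 < (1+ξ^2)*(x'^2-1) + η*(1+t') := by
    intro η x' t' hη h1 h2
    have h3 : (0:ℝ) ≤ (1+ξ^2)*(x'^2-1) := mul_nonneg hc2pos.le (by nlinarith)
    nlinarith
  have key : ∀ η > (0:ℝ), ∀ T > (0:ℝ), ∀ x ∈ Set.Icc (1:ℝ) b, ∀ t ∈ Set.Icc (0:ℝ) T,
      ψ x t < ξ*x + Real.sqrt ((1+ξ^2)*(x^2-1) + η*(1+t)) := by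
    intro η hη T hT
    by_contra hcon
    push_neg at hcon
    obtain ⟨x₁, hx₁, t₁, ht₁, hge⟩ := hcon
    have hΦcont : Continuous
        (fun pt : ℝ×ℝ => ξ*pt.1 + Real.sqrt ((1+ξ^2)*(pt.1^2-1) + η*(1+pt.2))) := by
      apply Continuous.add
      · fun_prop
      · exact Real.continuous_sqrt.comp (by fun_prop)
    set F : ℝ×ℝ → ℝ := fun pt =>
      ψ pt.1 pt.2 - (ξ*pt.1 + Real.sqrt ((1+ξ^2)*(pt.1^2-1) + η*(1+pt.2))) with hF_def
    have hKc : IsCompact (Set.Icc (1:ℝ) b ×ˢ Set.Icc (0:ℝ) T) :=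
      isCompact_Icc.prod isCompact_Icc
    have hKsub : (Set.Icc (1:ℝ) b ×ˢ Set.Icc (0:ℝ) T) ⊆ (Set.Icc 1 b ×ˢ Set.Ici 0) :=
      Set.prod_mono_right Set.Icc_subset_Ici_self
    have hFcont : ContinuousOn F (Set.Icc (1:ℝ) b ×ˢ Set.Icc (0:ℝ) T) :=
      (hcont.mono hKsub).sub hΦcont.continuousOn
    have hSclosed : IsClosed ((Set.Icc (1:ℝ) b ×ˢ Set.Icc (0:ℝ) T) ∩ F ⁻¹' (Set.Ici 0)) :=
      hFcont.preimage_isClosed_of_isClosed (isClosed_Icc.prod isClosed_Icc) isClosed_Ici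
    have hScomp : IsCompact ((Set.Icc (1:ℝ) b ×ˢ Set.Icc (0:ℝ) T) ∩ F ⁻¹' (Set.Ici 0)) :=
      hKc.of_isClosed_subset hSclosed Set.inter_subset_left
    have hSne : ((Set.Icc (1:ℝ) b ×ˢ Set.Icc (0:ℝ) T) ∩ F ⁻¹' (Set.Ici 0)).Nonempty := by
      refine ⟨(x₁,t₁), ⟨⟨hx₁, ht₁⟩, ?_⟩⟩
      show (0:ℝ) ≤ F (x₁,t₁)
      show (0:ℝ) ≤ ψ x₁ t₁ - (ξ*x₁ + Real.sqrt ((1+ξ^2)*(x₁^2-1) + η*(1+t₁)))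
      linarith
    obtain ⟨⟨x₀,t₀⟩, hmem, hminOn⟩ := hScomp.exists_isMinOn hSne continuous_snd.continuousOn
    obtain ⟨⟨hx₀p, ht₀p⟩, hF₀mem⟩ := hmem
    have hx₀ : x₀ ∈ Set.Icc (1:ℝ) b := hx₀p
    have ht₀ : t₀ ∈ Set.Icc (0:ℝ) T := ht₀p
    clear hx₀p ht₀p
    have hF₀ : ξ*x₀ + Real.sqrt ((1+ξ^2)*(x₀^2-1) + η*(1+t₀)) ≤ ψ x₀ t₀ := by
      have h1 : (0:ℝ) ≤ ψ x₀ t₀ - (ξ*x₀ + Real.sqrt ((1+ξ^2)*(x₀^2-1) + η*(1+t₀))) := hF₀mem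
      linarith
    have hmin : ∀ pt : ℝ×ℝ,
        pt ∈ ((Set.Icc (1:ℝ) b ×ˢ Set.Icc (0:ℝ) T) ∩ F ⁻¹' (Set.Ici 0)) → t₀ ≤ pt.2 :=
      fun pt hpt => hminOn hpt
    have ht₀pos : 0 < t₀ := by
      rcases lt_or_eq_of_le ht₀.1 with h | h
      · exact h
      · exfalso
        rw [← h] at hF₀
        have h1 := hinitle x₀ hx₀
        have h2 : Real.sqrt ((1+ξ^2)*(x₀^2-1)) <
            Real.sqrt ((1+ξ^2)*(x₀^2-1) + η*(1+0)) := by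
          apply Real.sqrt_lt_sqrt (mul_nonneg hc2pos.le (by nlinarith [hx₀.1]))
          linarith
        linarith
    have hx₀1 : 1 < x₀ := by
      rcases lt_or_eq_of_le hx₀.1 with h | h
      · exact h
      · exfalso
        rw [← h] at hF₀
        have h1 : ψ 1 t₀ = q := hbd1 t₀ (Set.mem_Ici.mpr ht₀pos.le)
        have h2 : 0 < Real.sqrt ((1+ξ^2)*((1:ℝ)^2-1) + η*(1+t₀)) :=
          Real.sqrt_pos.mpr (by nlinarith)
        rw [h1] at hF₀
        linarith
    have hx₀b : x₀ < b := by
      rcases lt_or_eq_of_le hx₀.2 with h | h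
      · exact h
      · exfalso
        rw [h] at hF₀
        have h1 : ψ b t₀ = p := hbdb t₀ (Set.mem_Ici.mpr ht₀pos.le)
        have h2 : Real.sqrt ((1+ξ^2)*(b^2-1)) <
            Real.sqrt ((1+ξ^2)*(b^2-1) + η*(1+t₀)) := by
          apply Real.sqrt_lt_sqrt (mul_nonneg hc2pos.le hb2.le)
          nlinarith
        rw [h1] at hF₀
        rw [hsqb] at h2
        linarith
    have hx₀' : x₀ ∈ Set.Ioo (1:ℝ) b := ⟨hx₀1, hx₀b⟩
    -- everywhere at time t₀, ψ is below the barrier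
    have hled : ∀ x' ∈ Set.Icc (1:ℝ) b,
        ψ x' t₀ ≤ ξ*x' + Real.sqrt ((1+ξ^2)*(x'^2-1) + η*(1+t₀)) := by
      intro x' hx'
      by_contra hgt
      push_neg at hgt
      have hcw : ContinuousOn (fun t' : ℝ => F (x', t')) (Set.Icc 0 T) :=
        hFcont.comp (Continuous.continuousOn (by fun_prop))
          (fun t' ht' => Set.mk_mem_prod hx' ht')
      have hne : (𝓝[Set.Ioo (0:ℝ) t₀] t₀).NeBot := by
        rw [← mem_closure_iff_nhdsWithin_neBot, closure_Ioo (ne_of_lt ht₀pos)]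
        exact ⟨ht₀pos.le, le_refl t₀⟩
      have hsub2 : Set.Ioo (0:ℝ) t₀ ⊆ Set.Icc 0 T :=
        fun τ hτ => ⟨hτ.1.le, le_trans hτ.2.le ht₀.2⟩
      have htd : Filter.Tendsto (fun t' : ℝ => F (x', t'))
          (𝓝[Set.Ioo (0:ℝ) t₀] t₀) (𝓝 (F (x', t₀))) :=
        ((hcw t₀ ht₀).mono_left (nhdsWithin_mono _ hsub2))
      have hFgt : 0 < F (x', t₀) := by
        show 0 < ψ x' t₀ - (ξ*x' + Real.sqrt ((1+ξ^2)*(x'^2-1) + η*(1+t₀)))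
        linarith
      have hev := htd.eventually_const_lt hFgt
      obtain ⟨t', hFt', ht'mem⟩ := (hev.and eventually_mem_nhdsWithin).exists
      have h3 : t₀ ≤ t' := hmin (x', t') ⟨⟨hx', hsub2 ht'mem⟩, le_of_lt hFt'⟩
      linarith [ht'mem.2]
    have heq : ψ x₀ t₀ = ξ*x₀ + Real.sqrt ((1+ξ^2)*(x₀^2-1) + η*(1+t₀)) :=
      le_antisymm (hled x₀ hx₀) hF₀
    have hrpos : 0 < Real.sqrt ((1+ξ^2)*(x₀^2-1) + η*(1+t₀)) :=
      Real.sqrt_pos.mpr (hargpos η x₀ t₀ hη hx₀.1 ht₀.1)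
    -- spatial derivative facts for the barrier
    have hRd : ∀ x' ∈ Set.Ioo (1:ℝ) b,
        HasDerivAt (fun y => Real.sqrt ((1+ξ^2)*(y^2-1) + η*(1+t₀)))
          ((1+ξ^2)*x'/Real.sqrt ((1+ξ^2)*(x'^2-1) + η*(1+t₀))) x' := by
      intro x' hx'
      have harg : 0 < (1+ξ^2)*(x'^2-1) + η*(1+t₀) := hargpos η x' t₀ hη hx'.1.le ht₀.1
      have h2 : HasDerivAt (fun y : ℝ => y^2) (2*x') x' := by
        simpa using hasDerivAt_pow 2 x'
      have h1 : HasDerivAt (fun y : ℝ => (1+ξ^2)*(y^2-1) + η*(1+t₀)) ((1+ξ^2)*(2*x')) x' :=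
        ((h2.sub_const 1).const_mul (1+ξ^2)).add_const (η*(1+t₀))
      have h3 := h1.sqrt (ne_of_gt harg)
      convert h3 using 1
      have hA : Real.sqrt ((1+ξ^2)*(x'^2-1) + η*(1+t₀)) ≠ 0 :=
        ne_of_gt (Real.sqrt_pos.mpr harg)
      field_simp
    have hΦxd : ∀ x' ∈ Set.Ioo (1:ℝ) b,
        HasDerivAt (fun y => ξ*y + Real.sqrt ((1+ξ^2)*(y^2-1) + η*(1+t₀)))
          (ξ + (1+ξ^2)*x'/Real.sqrt ((1+ξ^2)*(x'^2-1)+η*(1+t₀))) x' := by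
      intro x' hx'
      have h1 : HasDerivAt (fun y : ℝ => ξ*y) ξ x' := by
        simpa using (hasDerivAt_id x').const_mul ξ
      exact h1.add (hRd x' hx')
    -- second derivative of barrier at x₀
    have hmul : HasDerivAt (fun y : ℝ => (1+ξ^2)*y) (1+ξ^2) x₀ := by
      simpa using (hasDerivAt_id x₀).const_mul (1+ξ^2)
    have hW := (hasDerivAt_const x₀ ξ).add
      (hmul.div (hRd x₀ hx₀') (ne_of_gt hrpos))
    -- interior spatial maximum at x₀
    have hmaxres := aux_max (g := fun y => ψ y t₀ -
        (ξ*y + Real.sqrt ((1+ξ^2)*(y^2-1)+η*(1+t₀))))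
      (g1 := fun y => ψx y t₀ -
        (ξ + (1+ξ^2)*y/Real.sqrt ((1+ξ^2)*(y^2-1)+η*(1+t₀))))
      hx₀'
      (fun y hy => (hψxd y hy t₀ ht₀pos).sub (hΦxd y hy))
      (fun y hy => by
        show ψ y t₀ - (ξ*y + Real.sqrt ((1+ξ^2)*(y^2-1)+η*(1+t₀))) ≤
          ψ x₀ t₀ - (ξ*x₀ + Real.sqrt ((1+ξ^2)*(x₀^2-1)+η*(1+t₀)))
        have h1 := hled y ⟨hy.1.le, hy.2.le⟩
        linarith [heq])
      ((hψxxd x₀ hx₀' t₀ ht₀pos).sub hW)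
    have hgx0 : ψx x₀ t₀ -
        (ξ + (1+ξ^2)*x₀/Real.sqrt ((1+ξ^2)*(x₀^2-1)+η*(1+t₀))) = 0 := hmaxres.1
    have hgxx : ψxx x₀ t₀ -
        (0 + ((1+ξ^2) * Real.sqrt ((1+ξ^2)*(x₀^2-1)+η*(1+t₀)) -
          (1+ξ^2)*x₀ * ((1+ξ^2)*x₀/Real.sqrt ((1+ξ^2)*(x₀^2-1)+η*(1+t₀)))) /
          Real.sqrt ((1+ξ^2)*(x₀^2-1)+η*(1+t₀))^2) ≤ 0 := hmaxres.2
    -- time derivative at (x₀, t₀)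
    have hlin : HasDerivAt (fun τ : ℝ => (1+ξ^2)*(x₀^2-1) + η*(1+τ)) η t₀ := by
      have h1 : (fun τ : ℝ => (1+ξ^2)*(x₀^2-1) + η*(1+τ)) =
          fun τ : ℝ => η*τ + ((1+ξ^2)*(x₀^2-1) + η) := by funext τ; ring
      rw [h1]
      have h2 : HasDerivAt (fun τ : ℝ => η*τ) η t₀ := by
        simpa using (hasDerivAt_id t₀).const_mul η
      exact h2.add_const _
    have hsq_t := hlin.sqrt (ne_of_gt (hargpos η x₀ t₀ hη hx₀.1 ht₀.1))
    have hht : HasDerivAt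
        (fun τ => ψ x₀ τ - (ξ*x₀ + Real.sqrt ((1+ξ^2)*(x₀^2-1)+η*(1+τ))))
        (ψt x₀ t₀ - (0 + η/(2*Real.sqrt ((1+ξ^2)*(x₀^2-1)+η*(1+t₀))))) t₀ :=
      (hψtd x₀ hx₀' t₀ ht₀pos).sub ((hasDerivAt_const t₀ (ξ*x₀)).add hsq_t)
    have hd0 : 0 ≤ ψt x₀ t₀ - (0 + η/(2*Real.sqrt ((1+ξ^2)*(x₀^2-1)+η*(1+t₀)))) := by
      apply aux_time hht ht₀pos
      intro τ hτ0 hτlt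
      have h1 : ψ x₀ τ - (ξ*x₀ + Real.sqrt ((1+ξ^2)*(x₀^2-1)+η*(1+τ))) ≤ 0 := by
        by_contra h2
        push_neg at h2
        have h3 : t₀ ≤ τ := by
          apply hmin (x₀, τ)
          refine ⟨⟨hx₀, ⟨hτ0, le_trans hτlt.le ht₀.2⟩⟩, ?_⟩
          show (0:ℝ) ≤ ψ x₀ τ - (ξ*x₀ + Real.sqrt ((1+ξ^2)*(x₀^2-1)+η*(1+τ)))
          linarith
        linarith
      have h4 : ψ x₀ t₀ - (ξ*x₀ + Real.sqrt ((1+ξ^2)*(x₀^2-1)+η*(1+t₀))) = 0 := by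
        rw [heq]; ring
      linarith
    have hψtpos : 0 < ψt x₀ t₀ := by
      have hpos : 0 < η/(2*Real.sqrt ((1+ξ^2)*(x₀^2-1)+η*(1+t₀))) :=
        div_pos hη (by positivity)
      linarith
    -- PDE contradiction
    have hpde := hPDE x₀ hx₀' t₀ ht₀pos
    have hstat := stat_id ξ x₀ (Real.sqrt ((1+ξ^2)*(x₀^2-1)+η*(1+t₀))) (ne_of_gt hrpos)
    have hψx0 : ψx x₀ t₀ = ξ + (1+ξ^2)*x₀/Real.sqrt ((1+ξ^2)*(x₀^2-1)+η*(1+t₀)) := by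
      linarith
    have hE : (x₀^2 + ψ x₀ t₀^2) * ψxx x₀ t₀ +
        (1 + ψx x₀ t₀^2)*(x₀*ψx x₀ t₀ - ψ x₀ t₀) ≤ 0 := by
      rw [heq, hψx0]
      have hcoef : (0:ℝ) ≤ x₀^2 +
          (ξ*x₀ + Real.sqrt ((1+ξ^2)*(x₀^2-1)+η*(1+t₀)))^2 := by positivity
      have h1 := mul_le_mul_of_nonneg_left (by linarith [hgxx] : ψxx x₀ t₀ ≤
        ((1+ξ^2) * Real.sqrt ((1+ξ^2)*(x₀^2-1)+η*(1+t₀)) -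
          (1+ξ^2)*x₀ * ((1+ξ^2)*x₀/Real.sqrt ((1+ξ^2)*(x₀^2-1)+η*(1+t₀)))) /
          Real.sqrt ((1+ξ^2)*(x₀^2-1)+η*(1+t₀))^2) hcoef
      linarith [hstat]
    have hψtneg : ψt x₀ t₀ ≤ 0 := by
      rw [hpde]
      have h1 : 0 ≤ Q x₀ / (x₀*ψx x₀ t₀ + ψ x₀ t₀)^2 :=
        div_nonneg (hQnonneg x₀ ⟨hx₀1.le, hx₀b.le⟩) (sq_nonneg _)
      have h2 := mul_nonneg h1 (neg_nonneg.mpr hE)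
      nlinarith [h2]
    linarith
  -- conclusion by letting η → 0⁺
  intro x hx t ht
  have ht' : (0:ℝ) ≤ t := ht
  have hforall : ∀ η ∈ Set.Ioi (0:ℝ),
      ψ x t ≤ ξ*x + Real.sqrt ((1+ξ^2)*(x^2-1) + η*(1+t)) := by
    intro η hη
    exact le_of_lt (key η hη (t+1) (by linarith) x hx t ⟨ht', by linarith⟩)
  have htends : Filter.Tendsto (fun η : ℝ => ξ*x + Real.sqrt ((1+ξ^2)*(x^2-1) + η*(1+t)))
      (𝓝[>] (0:ℝ)) (𝓝 (ξ*x + Real.sqrt ((1+ξ^2)*(x^2-1)))) := by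
    have hc : Continuous (fun η : ℝ => ξ*x + Real.sqrt ((1+ξ^2)*(x^2-1) + η*(1+t))) := by
      apply Continuous.add continuous_const
      exact Real.continuous_sqrt.comp (by fun_prop)
    have h1 := (hc.tendsto 0).mono_left
      (nhdsWithin_le_nhds : 𝓝[Set.Ioi (0:ℝ)] 0 ≤ 𝓝 0)
    simpa using h1
  exact ge_of_tendsto htends (eventually_nhdsWithin_of_forall hforall)
end
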